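/- arXiv:2407.04835 — 11 statements merged into one kernel-verified Lean document; each statement's English description precedes it below -/
import Mathlib

section
/- Let $q > p > 2$ be finite real numbers. Then for every real-valued random variable $X$ on a probability space with $\mathbb{E}|X|^2 = 1$ and $\mathbb{E}|X|^q < \infty$, one has $\mathbb{E}|X| \leq 1 - C \cdot (\mathbb{E}|X|^p - 1)^{(q-2)/(q-p)} / (\mathbb{E}|X|^q - 1)^{(p-2)/(q-p)}$ with the explicit constant $C = (\min\{1, q-2\})^{(p-2)/(q-p)} / p^{2(q-2)/(q-p)}$. -/
/-!
Write `Y = |X|` and `g r x = x ^ r - 1 - r / 2 * (x ^ 2 - 1)` (`powExcess r x`). Since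
`E Y ^ 2 = 1`, `E (g r Y) = E Y ^ r - 1` and `E (Y - 1) ^ 2 = 2 (1 - E Y)`. For every `T ≥ 1` there
is the pointwise bound `g p x ≤ p (p - 1) / 2 * T ^ (p - 2) * (x - 1) ^ 2 + T ^ (p - q) * g q x`:
on `[0, T]` the quadratic term alone dominates `g p` (their difference is convex with a critical
point at `1`), and beyond `T` the right-hand side grows faster than `g p`. Taking expectations gives
`E Y ^ p - 1 ≤ p (p - 1) (1 - E Y) T ^ (p - 2) + (E Y ^ q - 1) T ^ (p - q)`; choosing `T` to
balance the two terms and solving for `1 - E Y` gives the theorem.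
-/

open MeasureTheory Real Set Filter Topology

theorem monotoneOn_Icc_of_hasDerivAt_nonneg {f f' : ℝ → ℝ} {a b : ℝ}
    (hf : ∀ t, HasDerivAt f (f' t) t) (hf' : ∀ t ∈ Ioo a b, 0 ≤ f' t) :
    MonotoneOn f (Icc a b) :=
  monotoneOn_of_hasDerivWithinAt_nonneg (convex_Icc a b)
    (fun t _ => (hf t).continuousAt.continuousWithinAt)
    (fun t _ => (hf t).hasDerivWithinAt) (by rwa [interior_Icc])

theorem antitoneOn_Icc_of_hasDerivAt_nonpos {f f' : ℝ → ℝ} {a b : ℝ}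
    (hf : ∀ t, HasDerivAt f (f' t) t) (hf' : ∀ t ∈ Ioo a b, f' t ≤ 0) :
    AntitoneOn f (Icc a b) :=
  antitoneOn_of_hasDerivWithinAt_nonpos (convex_Icc a b)
    (fun t _ => (hf t).continuousAt.continuousWithinAt)
    (fun t _ => (hf t).hasDerivWithinAt) (by rwa [interior_Icc])

theorem isMinOn_Icc_of_hasDerivAt_nonpos_of_nonneg {f f' : ℝ → ℝ} {a b c : ℝ}
    (hf : ∀ t, HasDerivAt f (f' t) t) (hl : ∀ t ∈ Ioo a c, f' t ≤ 0)
    (hr : ∀ t ∈ Ioo c b, 0 ≤ f' t) : IsMinOn f (Icc a b) c := by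
  refine isMinOn_iff.2 fun x hx => ?_
  rcases le_total x c with hxc | hcx
  · exact antitoneOn_Icc_of_hasDerivAt_nonpos hf hl ⟨hx.1, hxc⟩ ⟨hx.1.trans hxc, le_rfl⟩ hxc
  · exact monotoneOn_Icc_of_hasDerivAt_nonneg hf hr ⟨le_rfl, hcx.trans hx.2⟩ ⟨hcx, hx.2⟩ hcx

noncomputable def powExcess (r x : ℝ) : ℝ := x ^ r - 1 - r / 2 * (x ^ 2 - 1)

@[simp]
theorem powExcess_apply_one (r : ℝ) : powExcess r 1 = 0 := by
  simp [powExcess]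

theorem powExcess_two (x : ℝ) : powExcess 2 x = 0 := by
  rw [powExcess, rpow_two]; ring

theorem hasDerivAt_powExcess {r : ℝ} (hr : 1 ≤ r) (x : ℝ) :
    HasDerivAt (powExcess r) (r * (x ^ (r - 1) - x)) x := by
  have h := ((hasDerivAt_rpow_const (p := r) (Or.inr hr)).sub_const 1).sub
    (((hasDerivAt_pow 2 x).sub_const 1).const_mul (r / 2))
  exact h.congr_deriv (by simp only [Nat.cast_ofNat, Nat.add_one_sub_one, pow_one]; ring)

theorem powExcess_mono_left {a b x : ℝ} (ha : 2 ≤ a) (hab : a ≤ b) (hx : 0 ≤ x) :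
    powExcess a x ≤ powExcess b x := by
  have hd (t : ℝ) : HasDerivAt (fun t => powExcess b t - powExcess a t)
      (b * (t ^ (b - 1) - t) - a * (t ^ (a - 1) - t)) t :=
    (hasDerivAt_powExcess (by linarith) t).sub (hasDerivAt_powExcess (by linarith) t)
  have hmin := isMinOn_Icc_of_hasDerivAt_nonpos_of_nonneg (a := 0) (b := x) (c := 1) hd
    (fun t ⟨ht0, ht1⟩ => by
      have h1 : t ^ (b - 1) ≤ t ^ (a - 1) := rpow_le_rpow_of_exponent_ge ht0 ht1.le (by linarith)
      have h2 : t ^ (a - 1) ≤ t ^ (1 : ℝ) := rpow_le_rpow_of_exponent_ge ht0 ht1.le (by linarith)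
      rw [rpow_one] at h2
      nlinarith)
    (fun t ⟨ht1, _⟩ => by
      have h1 : t ^ (a - 1) ≤ t ^ (b - 1) := rpow_le_rpow_of_exponent_le ht1.le (by linarith)
      have h2 : t ^ (1 : ℝ) ≤ t ^ (a - 1) := rpow_le_rpow_of_exponent_le ht1.le (by linarith)
      rw [rpow_one] at h2
      nlinarith)
  have := isMinOn_iff.1 hmin x ⟨hx, le_rfl⟩
  simp only [powExcess_apply_one, sub_self] at this
  linarith

theorem powExcess_nonneg {r x : ℝ} (hr : 2 ≤ r) (hx : 0 ≤ x) : 0 ≤ powExcess r x :=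
  powExcess_two x ▸ powExcess_mono_left le_rfl hr hx

theorem powExcess_le_of_mem_Icc {p T x : ℝ} (hp : 2 ≤ p) (hT : 1 ≤ T) (hx : x ∈ Icc 0 T) :
    powExcess p x ≤ p * (p - 1) / 2 * T ^ (p - 2) * (x - 1) ^ 2 := by
  set K := p * (p - 1) * T ^ (p - 2)
  set φ' : ℝ → ℝ := fun t => K * (t - 1) - p * (t ^ (p - 1) - t)
  have hφ (t : ℝ) : HasDerivAt (fun t => K / 2 * (t - 1) ^ 2 - powExcess p t) (φ' t) t :=
    ((((hasDerivAt_id t).sub_const 1).pow 2).const_mul (K / 2)).sub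
      (hasDerivAt_powExcess (by linarith) t) |>.congr_deriv (by
        simp only [φ', id_eq, Nat.cast_ofNat, Nat.add_one_sub_one, pow_one, mul_one]; ring)
  have hφ' (t : ℝ) : HasDerivAt φ' (K - p * ((p - 1) * t ^ (p - 2) - 1)) t := by
    have h := (((hasDerivAt_id t).sub_const 1).const_mul K).sub
      (((hasDerivAt_rpow_const (x := t) (p := p - 1) (Or.inr (by linarith))).sub
        (hasDerivAt_id t)).const_mul p)
    exact h.congr_deriv (by rw [show p - 1 - 1 = p - 2 by ring]; simp)
  have hmono : MonotoneOn φ' (Icc 0 T) :=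
    monotoneOn_Icc_of_hasDerivAt_nonneg hφ' fun t ht => by
      have : t ^ (p - 2) ≤ T ^ (p - 2) := rpow_le_rpow ht.1.le ht.2.le (by linarith)
      have : 0 ≤ p * (p - 1) := by nlinarith
      nlinarith
  have hφ'1 : φ' 1 = 0 := by simp [φ']
  have hmin := isMinOn_Icc_of_hasDerivAt_nonpos_of_nonneg (c := 1) hφ
    (fun t ht => hφ'1 ▸ hmono ⟨ht.1.le, ht.2.le.trans hT⟩ ⟨zero_le_one, hT⟩ ht.2.le)
    (fun t ht => hφ'1 ▸ hmono ⟨zero_le_one, hT⟩ ⟨by linarith [ht.1], ht.2.le⟩ ht.1.le)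
  have := isMinOn_iff.1 hmin x hx
  simp only [sub_self, powExcess_apply_one] at this
  linarith

theorem powExcess_le_add {p q T x : ℝ} (hp : 2 ≤ p) (hpq : p ≤ q) (hT : 1 ≤ T) (hx : 0 ≤ x) :
    powExcess p x ≤
      p * (p - 1) / 2 * T ^ (p - 2) * (x - 1) ^ 2 + T ^ (p - q) * powExcess q x := by
  have hT0 : 0 < T := by linarith
  have hTq : 0 ≤ T ^ (p - q) := rpow_nonneg hT0.le _
  have hnear {y : ℝ} (hy : y ∈ Icc 0 T) :
      powExcess p y ≤ p * (p - 1) / 2 * T ^ (p - 2) * (y - 1) ^ 2 + T ^ (p - q) * powExcess q y :=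
    le_add_of_le_of_nonneg (powExcess_le_of_mem_Icc hp hT hy)
      (mul_nonneg hTq (powExcess_nonneg (by linarith) hy.1))
  rcases le_total x T with hxT | hTx
  · exact hnear ⟨hx, hxT⟩
  set K := p * (p - 1) * T ^ (p - 2)
  have hK : 0 ≤ K := mul_nonneg (by nlinarith) (rpow_nonneg hT0.le _)
  have hψ (t : ℝ) : HasDerivAt
      (fun t => K / 2 * (t - 1) ^ 2 + T ^ (p - q) * powExcess q t - powExcess p t)
      (K * (t - 1) + T ^ (p - q) * (q * (t ^ (q - 1) - t)) - p * (t ^ (p - 1) - t)) t :=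
    (((((hasDerivAt_id t).sub_const 1).pow 2).const_mul (K / 2)).add
      ((hasDerivAt_powExcess (by linarith) t).const_mul (T ^ (p - q)))).sub
      (hasDerivAt_powExcess (by linarith) t) |>.congr_deriv (by
        simp only [id_eq, Nat.cast_ofNat, Nat.add_one_sub_one, pow_one, mul_one]; ring)
  have hmin := isMinOn_Icc_of_hasDerivAt_nonpos_of_nonneg (a := T) (b := x) (c := T) hψ
    (fun t ht => absurd ht.2 ht.1.not_gt)
    (fun t ⟨hTt, _⟩ => by
      have ht : 0 < t := hT0.trans hTt
      have hq : 0 ≤ t ^ (q - 1) - t := by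
        simpa using rpow_le_rpow_of_exponent_le (x := t) (by linarith) (by linarith : 1 ≤ q - 1)
      have hdom : t ^ (p - 1) - t ≤ T ^ (p - q) * (t ^ (q - 1) - t) :=
        calc t ^ (p - 1) - t = t ^ (p - q) * t ^ (q - 1) - t := by
              rw [← rpow_add ht]; ring_nf
          _ ≤ t ^ (p - q) * (t ^ (q - 1) - t) := by
              have : t ^ (p - q) * t ≤ t := mul_le_of_le_one_left ht.le
                (rpow_le_one_of_one_le_of_nonpos (by linarith) (by linarith))
              linarith
          _ ≤ T ^ (p - q) * (t ^ (q - 1) - t) := mul_le_mul_of_nonneg_right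
              (rpow_le_rpow_of_nonpos hT0 hTt.le (by linarith)) hq
      nlinarith [mul_nonneg hTq hq])
  have := isMinOn_iff.1 hmin x ⟨hTx, le_rfl⟩
  have := hnear ⟨hT0.le, le_rfl⟩
  linarith

theorem le_mul_rpow_mul_rpow_of_forall_le {a b C δ A B : ℝ} (ha : 0 ≤ a) (hb : 0 < b)
    (hC : 0 ≤ C) (hδ : 0 ≤ δ) (hB : 0 ≤ B) (hAB : A ≤ B)
    (h : ∀ T, 1 ≤ T → A ≤ C * δ * T ^ a + B * T ^ (-b)) :
    A ≤ (C + 1) * δ ^ (b / (a + b)) * B ^ (a / (a + b)) := by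
  have hab : 0 < a + b := by linarith
  set s := a / (a + b) with hs_def
  have hs : b / (a + b) = 1 - s := by rw [hs_def]; field_simp; ring
  have hs1 : 0 < 1 - s := hs ▸ div_pos hb hab
  rw [hs, mul_assoc]
  have hR : 0 ≤ δ ^ (1 - s) * B ^ s := by positivity
  rcases hδ.eq_or_lt with rfl | hδ0
  · have hlim : Tendsto (fun T : ℝ => B * T ^ (-b)) atTop (𝓝 0) := by
      simpa using (tendsto_rpow_neg_atTop hb).const_mul B
    have hA : A ≤ 0 := ge_of_tendsto hlim <|
      (eventually_ge_atTop (1 : ℝ)).mono fun T hT => by simpa using h T hT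
    rw [zero_rpow hs1.ne', zero_mul, mul_zero]
    exact hA
  rcases le_or_gt B δ with hBδ | hδB
  · calc A ≤ B := hAB
      _ = B ^ (1 - s) * B ^ s := by rw [← rpow_add' hB (by simp)]; simp
      _ ≤ δ ^ (1 - s) * B ^ s := by gcongr
      _ ≤ (C + 1) * (δ ^ (1 - s) * B ^ s) := le_mul_of_one_le_left hR (by linarith)
  -- choose `T` with `T ^ (a + b) = B / δ`, which balances the two terms
  set x := B / δ
  have hx : 1 < x := (one_lt_div hδ0).2 hδB
  have hx0 : 0 < x := one_pos.trans hx
  set T := x ^ (1 / (a + b))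
  have hTa : T ^ a = x ^ s := by
    rw [← rpow_mul hx0.le, hs_def]; congr 1; field_simp
  have hTb : T ^ (-b) = x ^ s / x := by
    rw [← rpow_mul hx0.le, ← rpow_sub_one hx0.ne', hs_def]; congr 1; field_simp; ring
  have hxs : δ * x ^ s = δ ^ (1 - s) * B ^ s := by
    rw [div_rpow hB hδ, rpow_sub hδ0, rpow_one]; ring
  calc A ≤ C * δ * T ^ a + B * T ^ (-b) := h T (one_le_rpow hx.le (by positivity))
    _ = (C + 1) * (δ * x ^ s) := by
      rw [hTa, hTb, show B = δ * x by simp only [x]; field_simp]; field_simp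
    _ = (C + 1) * (δ ^ (1 - s) * B ^ s) := by rw [hxs]

theorem rpow_div_rpow_le_of_le_mul_rpow_mul_rpow {a b κ δ A B : ℝ} (ha : 0 ≤ a) (hb : 0 < b)
    (hκ : 0 ≤ κ) (hδ : 0 ≤ δ) (hA : 0 ≤ A) (hB : 0 ≤ B)
    (h : A ≤ κ * δ ^ (b / (a + b)) * B ^ (a / (a + b))) :
    A ^ ((a + b) / b) / B ^ (a / b) ≤ κ ^ ((a + b) / b) * δ := by
  have hab : 0 < a + b := by linarith
  have hpow : A ^ ((a + b) / b) ≤ κ ^ ((a + b) / b) * δ * B ^ (a / b) := by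
    have := rpow_le_rpow (z := (a + b) / b) hA h (by positivity)
    rwa [mul_rpow (by positivity) (by positivity), mul_rpow hκ (by positivity),
      ← rpow_mul hδ, ← rpow_mul hB, div_mul_div_cancel₀ hab.ne', div_self hb.ne', rpow_one,
      div_mul_div_cancel₀ hab.ne'] at this
  rcases (rpow_nonneg hB (a / b)).eq_or_lt with h0 | hpos
  · rw [← h0, div_zero]; positivity
  · rwa [div_le_iff₀ hpos]

section Moments

variable {Ω : Type*} [MeasurableSpace Ω] {μ : Measure Ω} [IsProbabilityMeasure μ] {Y : Ω → ℝ}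

theorem integrable_powExcess (hY2 : Integrable (fun ω => Y ω ^ 2) μ) {r : ℝ}
    (hr : Integrable (fun ω => Y ω ^ r) μ) : Integrable (fun ω => powExcess r (Y ω)) μ :=
  (hr.sub (integrable_const 1)).sub ((hY2.sub (integrable_const 1)).const_mul _)

theorem integral_powExcess (hY2 : Integrable (fun ω => Y ω ^ 2) μ) (h2 : ∫ ω, Y ω ^ 2 ∂μ = 1)
    {r : ℝ} (hr : Integrable (fun ω => Y ω ^ r) μ) :
    ∫ ω, powExcess r (Y ω) ∂μ = ∫ ω, Y ω ^ r ∂μ - 1 := by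
  have hr1 : Integrable (fun ω => Y ω ^ r - 1) μ := hr.sub (integrable_const 1)
  have h21 : Integrable (fun ω => Y ω ^ 2 - 1) μ := hY2.sub (integrable_const 1)
  simp only [powExcess]
  rw [integral_sub hr1 (h21.const_mul _), integral_sub hr (integrable_const 1),
    integral_const_mul, integral_sub hY2 (integrable_const 1), h2]
  simp

theorem integral_sub_one_sq (hY : Integrable Y μ) (hY2 : Integrable (fun ω => Y ω ^ 2) μ)
    (h2 : ∫ ω, Y ω ^ 2 ∂μ = 1) : ∫ ω, (Y ω - 1) ^ 2 ∂μ = 2 * (1 - ∫ ω, Y ω ∂μ) := by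
  have hlin : Integrable (fun ω => Y ω ^ 2 - 2 * Y ω) μ := hY2.sub (hY.const_mul 2)
  have h : (fun ω => (Y ω - 1) ^ 2) = fun ω => Y ω ^ 2 - 2 * Y ω + 1 := by ext; ring
  rw [h, integral_add hlin (integrable_const 1),
    integral_sub hY2 (hY.const_mul 2), integral_const_mul, h2]
  simp only [integral_const, probReal_univ, smul_eq_mul, mul_one]
  ring

theorem integral_rpow_sub_one_le (hY0 : ∀ ω, 0 ≤ Y ω) (hY : Integrable Y μ)
    (hY2 : Integrable (fun ω => Y ω ^ 2) μ) (h2 : ∫ ω, Y ω ^ 2 ∂μ = 1) {p q T : ℝ} (hp : 2 ≤ p)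
    (hpq : p ≤ q) (hYp : Integrable (fun ω => Y ω ^ p) μ) (hYq : Integrable (fun ω => Y ω ^ q) μ)
    (hT : 1 ≤ T) :
    ∫ ω, Y ω ^ p ∂μ - 1 ≤ p * (p - 1) * (1 - ∫ ω, Y ω ∂μ) * T ^ (p - 2) +
      (∫ ω, Y ω ^ q ∂μ - 1) * T ^ (-(q - p)) := by
  have hsq : Integrable (fun ω => (Y ω - 1) ^ 2) μ :=
    ((hY2.sub (hY.const_mul 2)).add (integrable_const 1)).congr
      (ae_of_all _ fun ω => by simp only [Pi.add_apply, Pi.sub_apply]; ring)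
  rw [← integral_powExcess hY2 h2 hYp, ← integral_powExcess hY2 h2 hYq, neg_sub]
  calc ∫ ω, powExcess p (Y ω) ∂μ
      ≤ ∫ ω, p * (p - 1) / 2 * T ^ (p - 2) * (Y ω - 1) ^ 2 + T ^ (p - q) * powExcess q (Y ω) ∂μ :=
        integral_mono (integrable_powExcess hY2 hYp)
          ((hsq.const_mul _).add ((integrable_powExcess hY2 hYq).const_mul _))
          fun ω => powExcess_le_add hp hpq hT (hY0 ω)
    _ = _ := by
      rw [integral_add (hsq.const_mul _) ((integrable_powExcess hY2 hYq).const_mul _),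
        integral_const_mul, integral_const_mul, integral_sub_one_sq hY hY2 h2]
      ring

theorem integral_le_one_sub_mul_rpow_div_rpow (hY0 : ∀ ω, 0 ≤ Y ω) (hY : Integrable Y μ)
    (hY2 : Integrable (fun ω => Y ω ^ 2) μ) (h2 : ∫ ω, Y ω ^ 2 ∂μ = 1) {p q c : ℝ} (hp : 2 ≤ p)
    (hpq : p < q) (hYp : Integrable (fun ω => Y ω ^ p) μ)
    (hYq : Integrable (fun ω => Y ω ^ q) μ) (hc0 : 0 ≤ c)
    (hc : c * (p * (p - 1) + 1) ^ ((q - 2) / (q - p)) ≤ 1) :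
    ∫ ω, Y ω ∂μ ≤ 1 - c * (∫ ω, Y ω ^ p ∂μ - 1) ^ ((q - 2) / (q - p)) /
      (∫ ω, Y ω ^ q ∂μ - 1) ^ ((p - 2) / (q - p)) := by
  have hδ : 0 ≤ 1 - ∫ ω, Y ω ∂μ := by
    have := integral_sub_one_sq hY hY2 h2 ▸ integral_nonneg fun ω => sq_nonneg (Y ω - 1)
    linarith
  have hA : 0 ≤ ∫ ω, Y ω ^ p ∂μ - 1 := integral_powExcess hY2 h2 hYp ▸
    integral_nonneg fun ω => powExcess_nonneg hp (hY0 ω)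
  have hAB : ∫ ω, Y ω ^ p ∂μ - 1 ≤ ∫ ω, Y ω ^ q ∂μ - 1 := by
    rw [← integral_powExcess hY2 h2 hYp, ← integral_powExcess hY2 h2 hYq]
    exact integral_mono (integrable_powExcess hY2 hYp) (integrable_powExcess hY2 hYq)
      fun ω => powExcess_mono_left hp hpq.le (hY0 ω)
  have key := rpow_div_rpow_le_of_le_mul_rpow_mul_rpow (by linarith) (by linarith)
    (by nlinarith) hδ hA (hA.trans hAB) <|
    le_mul_rpow_mul_rpow_of_forall_le (by linarith) (by linarith) (by nlinarith) hδ
      (hA.trans hAB) hAB fun T hT =>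
      integral_rpow_sub_one_le hY0 hY hY2 h2 hp hpq.le hYp hYq hT
  rw [show p - 2 + (q - p) = q - 2 by ring] at key
  have hM : 0 ≤ (∫ ω, Y ω ^ p ∂μ - 1) ^ ((q - 2) / (q - p)) /
      (∫ ω, Y ω ^ q ∂μ - 1) ^ ((p - 2) / (q - p)) := by
    have := hA.trans hAB; positivity
  rw [mul_div_assoc]
  nlinarith [mul_le_mul_of_nonneg_left key hc0, mul_le_mul_of_nonneg_right hc hδ]

end Moments

/-- **Theorem 1 with the explicit constant.** Let `q > p > 2` be finite real numbers. Then for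
every real-valued random variable `X` on a probability space with `E|X|^2 = 1` and
`E|X|^q < ∞`, one has
`E|X| ≤ 1 - C * (E|X|^p - 1)^((q-2)/(q-p)) / (E|X|^q - 1)^((p-2)/(q-p))`
with the explicit constant `C = (min 1 (q-2))^((p-2)/(q-p)) / p^(2*(q-2)/(q-p))`. -/
theorem sharpened_cauchy_schwarz_explicit_constant (p q : ℝ) (hp : 2 < p) (hpq : p < q)
    {Ω : Type*} [MeasurableSpace Ω] (μ : Measure Ω) [IsProbabilityMeasure μ]
    (X : Ω → ℝ) (hXmeas : Measurable X)
    (hX2 : (∫ ω, |X ω| ^ (2 : ℝ) ∂μ) = 1)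
    (hXq : Integrable (fun ω => |X ω| ^ q) μ) :
    (∫ ω, |X ω| ∂μ) ≤ 1 -
      (min 1 (q - 2)) ^ ((p - 2) / (q - p)) / p ^ (2 * (q - 2) / (q - p)) *
        ((∫ ω, |X ω| ^ p ∂μ) - 1) ^ ((q - 2) / (q - p)) /
          ((∫ ω, |X ω| ^ q ∂μ) - 1) ^ ((p - 2) / (q - p)) := by
  have hXr {r : ℝ} (hr0 : 0 ≤ r) (hrq : r ≤ q) : Integrable (fun ω => |X ω| ^ r) μ := by
    simpa only [Real.norm_eq_abs] using integrable_norm_rpow_of_le hXmeas.aestronglyMeasurable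
      hr0 (by linarith) hrq (by simpa only [Real.norm_eq_abs] using hXq)
  have hY : Integrable (fun ω => |X ω|) μ := by simpa using hXr zero_le_one (by linarith)
  have hY2 : Integrable (fun ω => |X ω| ^ 2) μ := by
    simpa using hXr zero_le_two (by linarith)
  simp only [rpow_two] at hX2
  have hm0 : 0 ≤ min 1 (q - 2) := le_min zero_le_one (by linarith)
  have hm : (min 1 (q - 2)) ^ ((p - 2) / (q - p)) ≤ 1 :=
    rpow_le_one hm0 (min_le_left _ _) (div_nonneg (by linarith) (by linarith))
  have hK : (p * (p - 1) + 1) ^ ((q - 2) / (q - p)) ≤ p ^ (2 * (q - 2) / (q - p)) := by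
    rw [mul_div_assoc, rpow_mul (by linarith), rpow_two]
    exact rpow_le_rpow (by nlinarith) (by nlinarith) (div_nonneg (by linarith) (by linarith))
  refine integral_le_one_sub_mul_rpow_div_rpow (fun ω => abs_nonneg (X ω)) hY hY2 hX2 hp.le hpq
    (hXr (by linarith) hpq.le) hXq
    (div_nonneg (rpow_nonneg hm0 _) (rpow_nonneg (by linarith) _)) ?_
  rw [div_mul_eq_mul_div, div_le_one (rpow_pos_of_pos (by linarith) _)]
  exact (mul_le_of_le_one_left (rpow_nonneg (by nlinarith) _) hm).trans hK
end

section
/- For every real-valued random variable $X$ on a probability space with $\mathbb{E}|X|^2 = 1$ and $\mathbb{E}|X|^6 < \infty$, one has $\mathbb{E}|X| \leq 1 - \tfrac{1}{3} \cdot (\mathbb{E}|X|^4 - 1)^2 / (\mathbb{E}|X|^6 - 1)$. -/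
open MeasureTheory

/-!
For a real random variable `Y` with `E Y² = 1`, write `m = E Y`, `a = E Y⁴ - 1`, `b = E Y⁶ - 1`;
these are the moments `E (Y - 1)² = 2 (1 - m)`, `E (Y² - 1)² = a` and
`E (Y² - 1)² (Y² + 2) = b`. The inequality
`4 u (y² - 1)² ≤ u² (y - 1)² + 6 (y² - 1)² (y² + 2)`, a sum of squares for every real `u`,
integrates to `2 a u ≤ (1 - m) u² + 3 b`, and the discriminant of this quadratic in `u` gives
`a² ≤ 3 (1 - m) b`. This is Cauchy–Schwarz for `Y - 1` and `(Y - 1) (Y + 1)²`, combined with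
`(y + 1)² ≤ 3/2 (y² + 2)`. The theorem is the case `Y = |X|`.
-/

theorem sq_div_le_of_forall_two_mul_le {a b c : ℝ} (h : ∀ t, 2 * a * t ≤ c * t ^ 2 + b) :
    a ^ 2 / b ≤ c := by
  have hdisc : discrim c (-2 * a) b ≤ 0 :=
    discrim_le_zero fun t => by nlinarith [h t]
  rw [discrim] at hdisc
  rcases (show 0 ≤ b by simpa using h 0).eq_or_lt with rfl | hb
  · -- `b = 0` forces `a = 0`, and the left-hand side is `a ^ 2 / 0 = 0`
    have : 0 ≤ c := by nlinarith [h 1]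
    simpa using this
  · rw [div_le_iff₀ hb]
    nlinarith

theorem four_mul_sq_sub_one_sq_le (y u : ℝ) :
    4 * u * (y ^ 2 - 1) ^ 2 ≤ u ^ 2 * (y - 1) ^ 2 + 6 * (y ^ 2 - 1) ^ 2 * (y ^ 2 + 2) := by
  linear_combination sq_nonneg ((y - 1) * (u - 2 * (y + 1) ^ 2))
    + 2 * sq_nonneg ((y ^ 2 - 1) * (y - 2))

section Moments

variable {Ω : Type*} [MeasurableSpace Ω] {μ : Measure Ω} [IsProbabilityMeasure μ] {Y : Ω → ℝ}

theorem two_mul_integral_pow_four_sub_one_mul_le (h1 : Integrable Y μ)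
    (h2 : Integrable (fun ω => Y ω ^ 2) μ) (h4 : Integrable (fun ω => Y ω ^ 4) μ)
    (h6 : Integrable (fun ω => Y ω ^ 6) μ) (hY2 : ∫ ω, Y ω ^ 2 ∂μ = 1) (u : ℝ) :
    2 * (∫ ω, Y ω ^ 4 ∂μ - 1) * u ≤ (1 - ∫ ω, Y ω ∂μ) * u ^ 2 + 3 * (∫ ω, Y ω ^ 6 ∂μ - 1) := by
  have hint : 0 ≤ ∫ ω, (6 * Y ω ^ 6 - 4 * u * Y ω ^ 4 + (u ^ 2 + 8 * u - 18) * Y ω ^ 2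
      - 2 * u ^ 2 * Y ω + (u ^ 2 - 4 * u + 12)) ∂μ :=
    integral_nonneg fun ω => by
      dsimp only [Pi.zero_apply]
      linear_combination four_mul_sq_sub_one_sq_le (Y ω) u
  rw [integral_add (by fun_prop) (by fun_prop), integral_sub (by fun_prop) (by fun_prop),
    integral_add (by fun_prop) (by fun_prop), integral_sub (by fun_prop) (by fun_prop)] at hint
  simp only [integral_const_mul, integral_const, hY2, probReal_univ, smul_eq_mul, one_mul] at hint
  linarith

theorem integral_le_one_sub_of_integral_sq_eq_one (h1 : Integrable Y μ)
    (h2 : Integrable (fun ω => Y ω ^ 2) μ) (h4 : Integrable (fun ω => Y ω ^ 4) μ)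
    (h6 : Integrable (fun ω => Y ω ^ 6) μ) (hY2 : ∫ ω, Y ω ^ 2 ∂μ = 1) :
    ∫ ω, Y ω ∂μ ≤ 1 - 1 / 3 * (∫ ω, Y ω ^ 4 ∂μ - 1) ^ 2 / (∫ ω, Y ω ^ 6 ∂μ - 1) := by
  have key := sq_div_le_of_forall_two_mul_le
    (two_mul_integral_pow_four_sub_one_mul_le h1 h2 h4 h6 hY2)
  rw [div_mul_eq_div_div_swap] at key
  rw [mul_div_assoc, one_div_mul_eq_div]
  linarith

end Moments

/-- The case `p = 4`, `q = 6` of the main theorem with the sharp constant `C(4,6) = 1/3`: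
for every real-valued random variable `X` on a probability space with `E|X|^2 = 1` and
`E|X|^6 < ∞`, one has `E|X| ≤ 1 - (1/3) * (E|X|^4 - 1)^2 / (E|X|^6 - 1)`. -/
theorem sharpened_cauchy_schwarz_four_six
    {Ω : Type*} [MeasurableSpace Ω] (μ : Measure Ω) [IsProbabilityMeasure μ]
    (X : Ω → ℝ) (hXmeas : Measurable X)
    (hX2 : (∫ ω, |X ω| ^ 2 ∂μ) = 1)
    (hX6 : Integrable (fun ω => |X ω| ^ 6) μ) :
    (∫ ω, |X ω| ∂μ) ≤ 1 -
      (1 / 3) * ((∫ ω, |X ω| ^ 4 ∂μ) - 1) ^ 2 / ((∫ ω, |X ω| ^ 6 ∂μ) - 1) := by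
  have hpow {k : ℕ} (hk : k ≤ 6) : Integrable (fun ω => |X ω| ^ k) μ := by
    simpa only [Real.norm_eq_abs] using integrable_norm_pow_of_le hXmeas.aestronglyMeasurable hk
      (by simpa only [Real.norm_eq_abs] using hX6)
  exact integral_le_one_sub_of_integral_sq_eq_one (by simpa using hpow (k := 1) (by norm_num))
    (hpow (by norm_num)) (hpow (by norm_num)) hX6 hX2
end

section
/- The constant $1/3$ in the inequality $\mathbb{E}|X| \leq 1 - \tfrac{1}{3}(\mathbb{E}|X|^4 - 1)^2/(\mathbb{E}|X|^6 - 1)$ (valid for all $X$ with $\mathbb{E}X^2 = 1$) is sharp: for every $C > 1/3$ there exists a random variable $X$ taking on exactly two positive values, with $\mathbb{E}X^2 = 1$ and $1 < \mathbb{E}X^6 < \infty$, such that $\mathbb{E}|X| > 1 - C \cdot (\mathbb{E}X^4 - 1)^2/(\mathbb{E}X^6 - 1)$. -/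
/-!
Put mass `r = 3 / (4 - a²)` at a point `a ∈ (0, 1)` and the rest at `2`. Then `E X² = 1`,
`1 - E X = (1 - a) / (a + 2)`, `E X⁴ - 1 = 3 (1 - a²)` and `E X⁶ - 1 = 3 (5 + a²) (1 - a²)`, so the
required inequality reduces to `5 + a² < 3 C (1 + a) (a + 2)`. At `a = 1` this reads `6 < 18 C`,
so it holds for all `a` close enough to `1` as soon as `C > 1/3`.
-/

open MeasureTheory ProbabilityTheory unitInterval Filter Topology

section Bernoulli

variable {X : Type*} [MeasurableSpace X] [MeasurableSingletonClass X] {x y : X}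

lemma bernoulliMeasure_singleton_left (hxy : x ≠ y) (p : I) :
    Ber(x, y, p) {x} = ENNReal.ofReal p := by
  rw [bernoulliMeasure_apply_of_mem_of_notMem p (measurableSet_singleton x) rfl hxy.symm]
  exact (ENNReal.ofReal_coe_nnreal (p := toNNReal p)).symm

lemma bernoulliMeasure_singleton_right (hxy : x ≠ y) (p : I) :
    Ber(x, y, p) {y} = ENNReal.ofReal (1 - p) := by
  rw [bernoulliMeasure_apply_of_notMem_of_mem p (measurableSet_singleton y) hxy rfl, ← coe_symm_eq]
  exact (ENNReal.ofReal_coe_nnreal (p := toNNReal (σ p))).symm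

end Bernoulli

section ExtremalLaw

noncomputable def extremalWeight (a : ℝ) : ℝ := 3 / (4 - a ^ 2)

variable {a : ℝ}

lemma extremalWeight_mem_Ioo (ha : a ^ 2 < 1) : extremalWeight a ∈ Set.Ioo 0 1 := by
  have hpos : 0 < 4 - a ^ 2 := by linarith
  refine ⟨div_pos three_pos hpos, (div_lt_one hpos).2 ?_⟩
  nlinarith [sq_nonneg a]

lemma extremalWeight_second_moment (ha : 4 - a ^ 2 ≠ 0) :
    extremalWeight a * a ^ 2 + (1 - extremalWeight a) * 2 ^ 2 = 1 := by
  unfold extremalWeight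
  field_simp
  ring

lemma one_sub_extremalWeight_first_moment (ha : 4 - a ^ 2 ≠ 0) :
    1 - (extremalWeight a * a + (1 - extremalWeight a) * 2) = (1 - a) / (a + 2) := by
  have ha2 : a + 2 ≠ 0 := fun h => ha (by rw [eq_neg_of_add_eq_zero_left h]; ring)
  unfold extremalWeight
  field_simp
  ring

lemma extremalWeight_fourth_moment_sub_one (ha : 4 - a ^ 2 ≠ 0) :
    extremalWeight a * a ^ 4 + (1 - extremalWeight a) * 2 ^ 4 - 1 = 3 * (1 - a ^ 2) := by
  unfold extremalWeight
  field_simp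
  ring

lemma extremalWeight_sixth_moment_sub_one (ha : 4 - a ^ 2 ≠ 0) :
    extremalWeight a * a ^ 6 + (1 - extremalWeight a) * 2 ^ 6 - 1 =
      3 * (5 + a ^ 2) * (1 - a ^ 2) := by
  unfold extremalWeight
  field_simp
  ring

lemma one_sub_div_lt_of_sq_add_five_lt {C : ℝ} (ha0 : 0 < a) (ha1 : a < 1)
    (h : 5 + a ^ 2 < 3 * C * (1 + a) * (a + 2)) :
    (1 - a) / (a + 2) < C * (3 * (1 - a ^ 2)) ^ 2 / (3 * (5 + a ^ 2) * (1 - a ^ 2)) := by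
  have hgap : 0 < 1 - a ^ 2 := by nlinarith
  rw [show C * (3 * (1 - a ^ 2)) ^ 2 / (3 * (5 + a ^ 2) * (1 - a ^ 2)) =
      3 * C * (1 + a) * (1 - a) / (5 + a ^ 2) by field_simp; ring,
    div_lt_div_iff₀ (by linarith) (by positivity)]
  nlinarith [mul_lt_mul_of_pos_left h (sub_pos.2 ha1)]

lemma exists_mem_Ioo_sq_add_five_lt {C : ℝ} (hC : 1 / 3 < C) :
    ∃ a ∈ Set.Ioo (0 : ℝ) 1, 5 + a ^ 2 < 3 * C * (1 + a) * (a + 2) := by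
  have hnear : ∀ᶠ a in 𝓝 (1 : ℝ), 0 < a ∧ 5 + a ^ 2 < 3 * C * (1 + a) * (a + 2) :=
    (eventually_gt_nhds one_pos).and <|
      ContinuousAt.eventually_lt (by fun_prop) (by fun_prop) (by norm_num; linarith)
  obtain ⟨a, ⟨ha0, h⟩, ha1⟩ :=
    ((hnear.filter_mono nhdsWithin_le_nhds).and (self_mem_nhdsWithin (s := Set.Iio 1))).exists
  exact ⟨a, ⟨ha0, ha1⟩, h⟩

end ExtremalLaw

/-- **Sharpness of the constant `1/3`** in the inequality
`E|X| ≤ 1 - (1/3) * (E|X|^4 - 1)^2 / (E|X|^6 - 1)` for `E X^2 = 1`: for every `C > 1/3` there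
is a random variable `X` taking exactly two positive values, with `E X^2 = 1` and
`1 < E X^6 < ∞`, such that `E X > 1 - C * (E X^4 - 1)^2 / (E X^6 - 1)`. -/
theorem constant_one_third_is_sharp (C : ℝ) (hC : 1 / 3 < C) :
    ∃ (Ω : Type) (_ : MeasurableSpace Ω) (μ : Measure Ω) (_ : IsProbabilityMeasure μ)
      (X : Ω → ℝ) (a b r : ℝ),
        Measurable X ∧
        0 < a ∧ a < b ∧ r ∈ Set.Ioo (0 : ℝ) 1 ∧
        μ {ω | X ω = a} = ENNReal.ofReal r ∧
        μ {ω | X ω = b} = ENNReal.ofReal (1 - r) ∧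
        (∫ ω, (X ω) ^ 2 ∂μ) = 1 ∧
        1 < (∫ ω, (X ω) ^ 6 ∂μ) ∧
        Integrable (fun ω => (X ω) ^ 6) μ ∧
        1 - C * ((∫ ω, (X ω) ^ 4 ∂μ) - 1) ^ 2 / ((∫ ω, (X ω) ^ 6 ∂μ) - 1) <
          (∫ ω, X ω ∂μ) := by
  obtain ⟨a, ⟨ha0, ha1⟩, hkey⟩ := exists_mem_Ioo_sq_add_five_lt hC
  have hsq : a ^ 2 < 1 := by nlinarith
  have hne : 4 - a ^ 2 ≠ 0 := by linarith
  have hr := extremalWeight_mem_Ioo hsq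
  let p : I := ⟨extremalWeight a, Set.Ioo_subset_Icc_self hr⟩
  have ha2 : a ≠ 2 := by linarith
  refine ⟨ℝ, inferInstance, Ber(a, 2, p), inferInstance, id, a, 2, extremalWeight a,
    measurable_id, ha0, by linarith, hr, ?_, ?_, ?_, ?_, integrable_bernoulliMeasure _ _ _ _, ?_⟩
  · exact bernoulliMeasure_singleton_left ha2 p
  · exact bernoulliMeasure_singleton_right ha2 p
  all_goals simp only [id, integral_bernoulliMeasure, smul_eq_mul]
  · exact extremalWeight_second_moment hne
  · have hgap : 0 < 3 * (5 + a ^ 2) * (1 - a ^ 2) := by nlinarith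
    linarith [extremalWeight_sixth_moment_sub_one hne]
  · rw [extremalWeight_fourth_moment_sub_one hne, extremalWeight_sixth_moment_sub_one hne]
    linarith [one_sub_extremalWeight_first_moment hne, one_sub_div_lt_of_sq_add_five_lt ha0 ha1 hkey]
end

section
/- For all real numbers $a, c \in [0,1]$ one has $c(2c-1)a^2 - (c+1)^2 a + 3c^2 - c + 2 \geq 0$, and the infimum of the left-hand side over $a, c \in (0,1)$ equals $0$ (approached as $a \to 1$ and $c = 1/2$). -/
/-! At `a = 1` the polynomial is the square `(2c - 1)²`, and the remainder factors through
`1 - a` with a cofactor that is nonnegative on the unit square. Along `c = 1/2` the square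
vanishes and the polynomial is `9/4 · (1 - a)`, which tends to `0` as `a → 1`. -/

open Set

section

variable {K : Type*}

def keyPoly [CommRing K] (a c : K) : K :=
  c * (2 * c - 1) * a ^ 2 - (c + 1) ^ 2 * a + 3 * c ^ 2 - c + 2

theorem keyPoly_eq_sq_add [CommRing K] (a c : K) :
    keyPoly a c = (2 * c - 1) ^ 2 + (1 - a) * ((c + 1) ^ 2 - c * (2 * c - 1) * (a + 1)) := by
  unfold keyPoly; ring

variable [Field K] [LinearOrder K] [IsStrictOrderedRing K]

theorem keyPoly_half (a : K) : keyPoly a (1 / 2) = 9 / 4 * (1 - a) := by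
  unfold keyPoly; ring

theorem keyPoly_cofactor_nonneg {a c : K} (ha : a ∈ Icc (0 : K) 1) (hc : c ∈ Icc (0 : K) 1) :
    0 ≤ (c + 1) ^ 2 - c * (2 * c - 1) * (a + 1) := by
  obtain ⟨ha0, ha1⟩ := ha
  obtain ⟨hc0, hc1⟩ := hc
  nlinarith [mul_nonneg hc0 (sub_nonneg.2 ha1), mul_nonneg (mul_nonneg hc0 hc0) (sub_nonneg.2 ha1),
    mul_nonneg hc0 (sub_nonneg.2 hc1)]

theorem keyPoly_nonneg {a c : K} (ha : a ∈ Icc (0 : K) 1) (hc : c ∈ Icc (0 : K) 1) :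
    0 ≤ keyPoly a c := by
  rw [keyPoly_eq_sq_add]
  exact add_nonneg (sq_nonneg _) (mul_nonneg (sub_nonneg.2 ha.2) (keyPoly_cofactor_nonneg ha hc))

end

theorem Ioo_subset_keyPoly_image :
    Ioo (0 : ℝ) (9 / 4) ⊆ {x | ∃ a ∈ Ioo (0 : ℝ) 1, ∃ c ∈ Ioo (0 : ℝ) 1, keyPoly a c = x} := by
  rintro x ⟨hx0, hx1⟩
  refine ⟨1 - 4 / 9 * x, ⟨by linarith, by linarith⟩, 1 / 2, by norm_num, ?_⟩
  rw [keyPoly_half]; ring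

/-- The key polynomial computation behind `C(4,6) = 1/3`: for all `a, c ∈ [0,1]` one has
`c(2c-1)a² - (c+1)²a + 3c² - c + 2 ≥ 0`, and the infimum of the left-hand side over
`a, c ∈ (0,1)` equals `0`. -/
theorem key_polynomial_nonneg_and_infimum_zero :
    (∀ a ∈ Set.Icc (0 : ℝ) 1, ∀ c ∈ Set.Icc (0 : ℝ) 1,
      0 ≤ c * (2 * c - 1) * a ^ 2 - (c + 1) ^ 2 * a + 3 * c ^ 2 - c + 2) ∧
    IsGLB {x : ℝ | ∃ a ∈ Set.Ioo (0 : ℝ) 1, ∃ c ∈ Set.Ioo (0 : ℝ) 1,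
      c * (2 * c - 1) * a ^ 2 - (c + 1) ^ 2 * a + 3 * c ^ 2 - c + 2 = x} 0 := by
  refine ⟨fun a ha c hc => keyPoly_nonneg ha hc, ?_⟩
  have image_nonneg :
      {x | ∃ a ∈ Ioo (0 : ℝ) 1, ∃ c ∈ Ioo (0 : ℝ) 1, keyPoly a c = x} ⊆ Ici 0 := by
    rintro x ⟨a, ha, c, hc, rfl⟩
    exact keyPoly_nonneg (Ioo_subset_Icc_self ha) (Ioo_subset_Icc_self hc)
  exact (isGLB_Ioo (by norm_num)).of_subset_of_superset isGLB_Ici Ioo_subset_keyPoly_image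
    image_nonneg
end

section
/- For all real numbers $a, c \in (0,1)$ and every real $p \geq 2$, one has $B(a,c,p) \leq p^2$, where $B(a,c,p) = \dfrac{c^{p-2}(a^p - 1) + c^p(a^2 - a^p) + 1 - a^2}{(1-c)(1-a)(1-ac)}$. -/
/-!
Put `q = p - 2` and `φ r = 1 - a - (1 - a c) c ^ r + a (1 - c) a ^ r c ^ r`. The numerator of
`B` equals `(1 + a) φ q + a c ^ q (1 - a ^ q) (1 - c) (1 - a c)`, so it suffices to bound `φ`.
It obeys the recursion `φ r = (1 - a) (1 - a c) (1 - c ^ r) + a c φ (r - 1)` and is nonpositive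
on `[-1, 0]` by two Bernoulli inequalities; with `1 - c ^ r ≤ (r + 1) (1 - c)` the recursion
propagates the bound `φ r ≤ (r + 1) (r + 2) / 2 · (1 - c) (1 - a) (1 - a c)` from `[-1, 0]` to
all `r ≥ -1`. Altogether the numerator is at most `p ^ 2 - 1` times the denominator.
-/

open Real

theorem one_sub_rpow_le_mul_one_sub {x q : ℝ} (hx : 0 ≤ x) (hq : 1 ≤ q) :
    1 - x ^ q ≤ q * (1 - x) := by
  have h := one_add_mul_self_le_rpow_one_add (s := x - 1) (by linarith) hq
  rw [add_sub_cancel] at h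
  linarith

theorem rpow_le_one_sub_add_mul {x t : ℝ} (hx : 0 ≤ x) (ht₀ : 0 ≤ t) (ht₁ : t ≤ 1) :
    x ^ t ≤ 1 - t + t * x := by
  have h := rpow_one_add_le_one_add_mul_self (s := x - 1) (by linarith) ht₀ ht₁
  rw [add_sub_cancel] at h
  linarith

theorem one_sub_rpow_le_add_one_mul {x q : ℝ} (hx₀ : 0 < x) (hx₁ : x ≤ 1) (hq : 0 ≤ q) :
    1 - x ^ q ≤ (q + 1) * (1 - x) := by
  have hmono : x ^ (q + 1) ≤ x ^ q := rpow_le_rpow_of_exponent_ge hx₀ hx₁ (by linarith)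
  linarith [one_sub_rpow_le_mul_one_sub hx₀.le (by linarith : 1 ≤ q + 1)]

noncomputable def phi (a c r : ℝ) : ℝ :=
  1 - a - (1 - a * c) * c ^ r + a * (1 - c) * (a ^ r * c ^ r)

section

variable {a c : ℝ}

theorem phi_eq_add_mul_phi_sub_one (ha : 0 < a) (hc : 0 < c) (r : ℝ) :
    phi a c r = (1 - a) * (1 - a * c) * (1 - c ^ r) + a * c * phi a c (r - 1) := by
  simp only [phi, rpow_sub_one ha.ne', rpow_sub_one hc.ne']
  field_simp
  ring

theorem phi_nonpos (ha₀ : 0 < a) (ha₁ : a ≤ 1) (hc₀ : 0 < c) (hc₁ : c ≤ 1) {r : ℝ}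
    (hr₀ : -1 ≤ r) (hr₁ : r ≤ 0) : phi a c r ≤ 0 := by
  have hA : a * a ^ r ≤ -r + (1 + r) * a := by
    have h := rpow_le_one_sub_add_mul ha₀.le (by linarith : 0 ≤ 1 + r) (by linarith)
    rw [rpow_add ha₀, rpow_one] at h
    linarith
  have hC : 1 ≤ c ^ r * (1 + r - r * c) := by
    have h := rpow_le_one_sub_add_mul hc₀.le (by linarith : 0 ≤ -r) (by linarith)
    have hinv : c ^ r * c ^ (-r) = 1 := by rw [← rpow_add hc₀, add_neg_cancel, rpow_zero]
    nlinarith [rpow_pos_of_pos hc₀ r]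
  have hAC := mul_le_mul_of_nonneg_left hA
    (mul_nonneg (sub_nonneg.2 hc₁) (rpow_pos_of_pos hc₀ r).le)
  calc phi a c r ≤ (1 - a) * (1 - c ^ r * (1 + r - r * c)) := by unfold phi; nlinarith
    _ ≤ 0 := mul_nonpos_of_nonneg_of_nonpos (by linarith) (by linarith)

theorem phi_le (ha₀ : 0 < a) (ha₁ : a ≤ 1) (hc₀ : 0 < c) (hc₁ : c ≤ 1) {r : ℝ}
    (hr : -1 ≤ r) :
    phi a c r ≤ (r + 1) * (r + 2) / 2 * ((1 - c) * (1 - a) * (1 - a * c)) := by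
  have hac : a * c ≤ 1 := mul_le_one₀ ha₁ hc₀.le hc₁
  have hD : 0 ≤ (1 - c) * (1 - a) * (1 - a * c) := by
    apply mul_nonneg (mul_nonneg _ _) _ <;> linarith
  obtain ⟨n, hn⟩ := exists_nat_ge r
  induction n generalizing r with
  | zero =>
    exact (phi_nonpos ha₀ ha₁ hc₀ hc₁ hr (by exact_mod_cast hn)).trans
      (mul_nonneg (by nlinarith) hD)
  | succ n ih =>
    rcases le_or_gt r n with hrn | hrn
    · exact ih hr hrn
    have hr₀ : 0 ≤ r := n.cast_nonneg.trans hrn.le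
    have hprev := ih (r := r - 1) (by linarith) (by push_cast at hn; linarith)
    have hstep : (1 - a) * (1 - a * c) * (1 - c ^ r)
        ≤ (r + 1) * ((1 - c) * (1 - a) * (1 - a * c)) := by
      have h := one_sub_rpow_le_add_one_mul hc₀ hc₁ hr₀
      have : 0 ≤ (1 - a) * (1 - a * c) := by apply mul_nonneg <;> linarith
      nlinarith
    have hK : 0 ≤ (r - 1 + 1) * (r - 1 + 2) / 2 * ((1 - c) * (1 - a) * (1 - a * c)) :=
      mul_nonneg (by nlinarith) hD
    rw [phi_eq_add_mul_phi_sub_one ha₀ hc₀]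
    nlinarith [mul_le_mul_of_nonneg_left hprev (by positivity : 0 ≤ a * c)]

theorem numerator_eq_phi (ha : 0 < a) (hc : 0 < c) (p : ℝ) :
    c ^ (p - 2) * (a ^ p - 1) + c ^ p * (a ^ 2 - a ^ p) + 1 - a ^ 2 =
      (1 + a) * phi a c (p - 2) +
        a * c ^ (p - 2) * (1 - a ^ (p - 2)) * ((1 - c) * (1 - a * c)) := by
  simp only [phi, rpow_sub ha, rpow_sub hc, rpow_two]
  field_simp
  ring

theorem numerator_le (ha₀ : 0 < a) (ha₁ : a ≤ 1) (hc₀ : 0 < c) (hc₁ : c ≤ 1) {p : ℝ}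
    (hp : 2 ≤ p) :
    c ^ (p - 2) * (a ^ p - 1) + c ^ p * (a ^ 2 - a ^ p) + 1 - a ^ 2 ≤
      (p ^ 2 - 1) * ((1 - c) * (1 - a) * (1 - a * c)) := by
  have hac : a * c ≤ 1 := mul_le_one₀ ha₁ hc₀.le hc₁
  have hD : 0 ≤ (1 - c) * (1 - a) * (1 - a * c) := by
    apply mul_nonneg (mul_nonneg _ _) _ <;> linarith
  have hrest : a * c ^ (p - 2) * (1 - a ^ (p - 2)) ≤ (p - 1) * (1 - a) := by
    have hsmall : a * c ^ (p - 2) ≤ 1 :=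
      mul_le_one₀ ha₁ (rpow_nonneg hc₀.le _) (rpow_le_one hc₀.le hc₁ (by linarith))
    have hA : 0 ≤ 1 - a ^ (p - 2) := sub_nonneg.2 (rpow_le_one ha₀.le ha₁ (by linarith))
    have h := one_sub_rpow_le_add_one_mul ha₀ ha₁ (by linarith : 0 ≤ p - 2)
    nlinarith
  have hphi : (1 + a) * phi a c (p - 2) ≤ p * (p - 1) * ((1 - c) * (1 - a) * (1 - a * c)) := by
    calc (1 + a) * phi a c (p - 2)
        ≤ (1 + a) * ((p - 2 + 1) * (p - 2 + 2) / 2 * ((1 - c) * (1 - a) * (1 - a * c))) := by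
          gcongr
          exact phi_le ha₀ ha₁ hc₀ hc₁ (by linarith)
      _ ≤ 2 * ((p - 2 + 1) * (p - 2 + 2) / 2 * ((1 - c) * (1 - a) * (1 - a * c))) :=
          mul_le_mul_of_nonneg_right (by linarith) (mul_nonneg (by nlinarith) hD)
      _ = p * (p - 1) * ((1 - c) * (1 - a) * (1 - a * c)) := by ring
  rw [numerator_eq_phi ha₀ hc₀]
  linarith [mul_le_mul_of_nonneg_right hrest (mul_nonneg (by linarith : 0 ≤ 1 - c)
    (by linarith : 0 ≤ 1 - a * c))]

end

/-- **Upper bound lemma.** For all `a, c ∈ (0,1)` and all real `p ≥ 2`,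
`B(a,c,p) = (c^(p-2)(aᵖ-1) + cᵖ(a²-aᵖ) + 1-a²) / ((1-c)(1-a)(1-ac)) ≤ p²`. -/
theorem B_upper_bound (a c p : ℝ) (ha : a ∈ Set.Ioo (0 : ℝ) 1)
    (hc : c ∈ Set.Ioo (0 : ℝ) 1) (hp : 2 ≤ p) :
    (c ^ (p - 2) * (a ^ p - 1) + c ^ p * (a ^ 2 - a ^ p) + 1 - a ^ 2) /
        ((1 - c) * (1 - a) * (1 - a * c)) ≤ p ^ 2 := by
  obtain ⟨ha₀, ha₁⟩ := ha
  obtain ⟨hc₀, hc₁⟩ := hc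
  have hD : 0 < (1 - c) * (1 - a) * (1 - a * c) := by
    have : a * c < 1 := mul_lt_one_of_nonneg_of_lt_one_left ha₀.le ha₁ hc₁.le
    apply mul_pos (mul_pos _ _) _ <;> linarith
  rw [div_le_iff₀ hD]
  calc _ ≤ (p ^ 2 - 1) * ((1 - c) * (1 - a) * (1 - a * c)) :=
        numerator_le ha₀ ha₁.le hc₀ hc₁.le hp
    _ ≤ p ^ 2 * ((1 - c) * (1 - a) * (1 - a * c)) := by gcongr; linarith
end

section
/- Fix $p \in (0,1)$ and let $\xi_1, \ldots, \xi_n$ be i.i.d. random variables with $\mathbb{P}(\xi_1 = \sqrt{(1-p)/p}) = p$ and $\mathbb{P}(\xi_1 = -\sqrt{p/(1-p)}) = 1-p$. Then for all real numbers $a_1, \ldots, a_n$ with $a_1^2 + \cdots + a_n^2 = 1$, one has $\mathbb{E}\Big(\sum_{j=1}^n a_j \xi_j\Big)^4 = 3 + (\mathbb{E}\xi_1^4 - 3)\sum_{j=1}^n a_j^4$, and consequently $\mathbb{E}\Big(\sum_{j=1}^n a_j \xi_j\Big)^4 \geq 1 + \min\Big\{2, \frac{(2p-1)^2}{p(1-p)}\Big\}$.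 -/
/-!
For independent centred `f`, `g` the odd cross terms of `(f + g)⁴` have zero mean, so
`E(f + g)⁴ = Ef⁴ + 6 Ef² Eg² + Eg⁴`. By induction, independent centred `Xⱼ` satisfy
`E(∑ Xⱼ)⁴ = ∑ EXⱼ⁴ + 3((∑ EXⱼ²)² - ∑ (EXⱼ²)²)`, which for `Xⱼ = aⱼξⱼ`, `Eξ² = 1`, `∑ aⱼ² = 1`
is `3 + (Eξ⁴ - 3) ∑ aⱼ⁴`. With `Eξ⁴ = 1 + (2p-1)²/(p(1-p))` this is affine in
`∑ aⱼ⁴ ∈ [0, (∑ aⱼ²)²] = [0, 1]`, hence at least its smaller endpoint value.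
-/

open MeasureTheory ProbabilityTheory Finset

namespace MeasureTheory

variable {Ω : Type*} [MeasurableSpace Ω] {μ : Measure Ω}

lemma MemLp.integrable_pow_of_le [IsFiniteMeasure μ] {f : Ω → ℝ} {n k : ℕ}
    (hf : MemLp f n μ) (hk : k ≤ n) : Integrable (fun ω => f ω ^ k) μ := by
  have h := (hf.mono_exponent (by exact_mod_cast hk)).integrable_norm_pow'
  refine h.mono' (hf.aestronglyMeasurable.pow k) (ae_of_all _ fun ω => ?_)
  simp [norm_pow]

lemma integral_finsetSum_eq_zero {ι : Type*} {X : ι → Ω → ℝ} (hX : ∀ i, Integrable (X i) μ)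
    (h0 : ∀ i, ∫ ω, X i ω ∂μ = 0) (s : Finset ι) : ∫ ω, ∑ j ∈ s, X j ω ∂μ = 0 := by
  rw [integral_finsetSum _ fun j _ => hX j]
  exact sum_eq_zero fun j _ => h0 j

end MeasureTheory

namespace ProbabilityTheory

variable {Ω : Type*} [MeasurableSpace Ω] {μ : Measure Ω} {f g : Ω → ℝ}
  {ι : Type*} {X : ι → Ω → ℝ}

lemma IndepFun.integral_add_pow [IsFiniteMeasure μ] {n : ℕ}
    (hfg : IndepFun f g μ) (hf : MemLp f n μ) (hg : MemLp g n μ) :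
    ∫ ω, (f ω + g ω) ^ n ∂μ =
      ∑ k ∈ range (n + 1), (∫ ω, f ω ^ k ∂μ) * (∫ ω, g ω ^ (n - k) ∂μ) * n.choose k := by
  have hpow : ∀ k ∈ range (n + 1),
      IndepFun (fun ω => f ω ^ k) (fun ω => g ω ^ (n - k)) μ ∧
        Integrable (fun ω => f ω ^ k) μ ∧ Integrable (fun ω => g ω ^ (n - k)) μ := fun k hk =>
    ⟨hfg.comp (measurable_id.pow_const k) (measurable_id.pow_const (n - k)),
      hf.integrable_pow_of_le (mem_range_succ_iff.mp hk), hg.integrable_pow_of_le (n.sub_le k)⟩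
  simp_rw [add_pow]
  rw [integral_finsetSum _ fun k hk => ?_]
  · refine sum_congr rfl fun k hk => ?_
    obtain ⟨hind, hfk, hgk⟩ := hpow k hk
    rw [integral_mul_const,
      hind.integral_fun_mul_eq_mul_integral hfk.aestronglyMeasurable hgk.aestronglyMeasurable]
  · obtain ⟨hind, hfk, hgk⟩ := hpow k hk
    exact (hind.integrable_mul hfk hgk).mul_const _

lemma iIndepFun.indepFun_sum_apply_of_notMem (hX : iIndepFun X μ)
    (hXm : ∀ i, AEMeasurable (X i) μ) {s : Finset ι} {i : ι} (hi : i ∉ s) :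
    IndepFun (X i) (fun ω => ∑ j ∈ s, X j ω) μ := by
  simpa only [Finset.sum_fn] using (hX.indepFun_finsetSum_of_notMem₀ hXm hi).symm

variable [IsProbabilityMeasure μ]

lemma IndepFun.integral_add_sq_of_integral_eq_zero (hfg : IndepFun f g μ)
    (hf : MemLp f 2 μ) (hg : MemLp g 2 μ) (hf0 : ∫ ω, f ω ∂μ = 0) (hg0 : ∫ ω, g ω ∂μ = 0) :
    ∫ ω, (f ω + g ω) ^ 2 ∂μ = ∫ ω, f ω ^ 2 ∂μ + ∫ ω, g ω ^ 2 ∂μ := by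
  rw [hfg.integral_add_pow (n := 2) (by exact_mod_cast hf) (by exact_mod_cast hg)]
  norm_num [sum_range_succ, hf0, hg0]
  ring

lemma IndepFun.integral_add_pow_four_of_integral_eq_zero (hfg : IndepFun f g μ)
    (hf : MemLp f 4 μ) (hg : MemLp g 4 μ) (hf0 : ∫ ω, f ω ∂μ = 0) (hg0 : ∫ ω, g ω ∂μ = 0) :
    ∫ ω, (f ω + g ω) ^ 4 ∂μ =
      ∫ ω, f ω ^ 4 ∂μ + 6 * (∫ ω, f ω ^ 2 ∂μ) * (∫ ω, g ω ^ 2 ∂μ) + ∫ ω, g ω ^ 4 ∂μ := by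
  rw [hfg.integral_add_pow (n := 4) (by exact_mod_cast hf) (by exact_mod_cast hg)]
  norm_num [sum_range_succ, Nat.choose, hf0, hg0]
  ring

lemma iIndepFun.integral_sum_sq_of_integral_eq_zero (hX : iIndepFun X μ)
    (h2 : ∀ i, MemLp (X i) 2 μ) (h0 : ∀ i, ∫ ω, X i ω ∂μ = 0) (s : Finset ι) :
    ∫ ω, (∑ j ∈ s, X j ω) ^ 2 ∂μ = ∑ j ∈ s, ∫ ω, X j ω ^ 2 ∂μ := by
  classical
  induction s using Finset.induction_on with
  | empty => simp
  | @insert i s hi ih =>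
    have hind :=
      hX.indepFun_sum_apply_of_notMem (fun j => (h2 j).aestronglyMeasurable.aemeasurable) hi
    simp only [sum_insert hi]
    rw [hind.integral_add_sq_of_integral_eq_zero (h2 i) (memLp_finsetSum s fun j _ => h2 j) (h0 i)
      (integral_finsetSum_eq_zero (fun j => (h2 j).integrable one_le_two) h0 s), ih]

lemma iIndepFun.integral_sum_pow_four_of_integral_eq_zero (hX : iIndepFun X μ)
    (h4 : ∀ i, MemLp (X i) 4 μ) (h0 : ∀ i, ∫ ω, X i ω ∂μ = 0) (s : Finset ι) :
    ∫ ω, (∑ j ∈ s, X j ω) ^ 4 ∂μ = ∑ j ∈ s, ∫ ω, X j ω ^ 4 ∂μ +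
      3 * ((∑ j ∈ s, ∫ ω, X j ω ^ 2 ∂μ) ^ 2 - ∑ j ∈ s, (∫ ω, X j ω ^ 2 ∂μ) ^ 2) := by
  classical
  have h2 : ∀ i, MemLp (X i) 2 μ := fun i => (h4 i).mono_exponent (by norm_num)
  induction s using Finset.induction_on with
  | empty => simp
  | @insert i s hi ih =>
    have hind :=
      hX.indepFun_sum_apply_of_notMem (fun j => (h4 j).aestronglyMeasurable.aemeasurable) hi
    simp only [sum_insert hi]
    rw [hind.integral_add_pow_four_of_integral_eq_zero (h4 i) (memLp_finsetSum s fun j _ => h4 j)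
      (h0 i) (integral_finsetSum_eq_zero (fun j => (h4 j).integrable (by norm_num)) h0 s), ih,
      hX.integral_sum_sq_of_integral_eq_zero h2 h0]
    ring

end ProbabilityTheory

section TwoPoint

variable {Ω : Type*} [MeasurableSpace Ω] {μ : Measure Ω} {f : Ω → ℝ} {c d p : ℝ}

lemma memLp_top_of_ae_eq_or_eq (hf : AEStronglyMeasurable f μ)
    (h : ∀ᵐ ω ∂μ, f ω = c ∨ f ω = d) : MemLp f ⊤ μ :=
  memLp_top_of_bound hf (max |c| |d|) <| h.mono fun ω hω => by
    rcases hω with hω | hω <;> simp [hω]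

variable [IsProbabilityMeasure μ]

lemma ae_eq_or_eq_of_measure_eq (hf : Measurable f) (hcd : c ≠ d) (hp0 : 0 ≤ p) (hp1 : p ≤ 1)
    (hc : μ {ω | f ω = c} = ENNReal.ofReal p) (hd : μ {ω | f ω = d} = ENNReal.ofReal (1 - p)) :
    ∀ᵐ ω ∂μ, f ω = c ∨ f ω = d := by
  have hdisj : Disjoint {ω | f ω = c} {ω | f ω = d} :=
    Set.disjoint_left.mpr fun ω hωc hωd => hcd (hωc.symm.trans hωd)
  rw [ae_iff_prob_eq_one (by fun_prop), Set.ofPred_or,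
    measure_union hdisj (hf (measurableSet_singleton d)), hc, hd,
    ← ENNReal.ofReal_add hp0 (sub_nonneg.mpr hp1), add_sub_cancel, ENNReal.ofReal_one]

lemma integral_comp_of_measure_eq (hf : Measurable f) (hcd : c ≠ d) (hp0 : 0 ≤ p) (hp1 : p ≤ 1)
    (hc : μ {ω | f ω = c} = ENNReal.ofReal p) (hd : μ {ω | f ω = d} = ENNReal.ofReal (1 - p))
    (g : ℝ → ℝ) : ∫ ω, g (f ω) ∂μ = p * g c + (1 - p) * g d := by
  have hCm : MeasurableSet {ω | f ω = c} := hf (measurableSet_singleton c)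
  have hDm : MeasurableSet {ω | f ω = d} := hf (measurableSet_singleton d)
  have hsplit : (fun ω => g (f ω)) =ᵐ[μ] fun ω =>
      {ω | f ω = c}.indicator (fun _ => g c) ω + {ω | f ω = d}.indicator (fun _ => g d) ω := by
    filter_upwards [ae_eq_or_eq_of_measure_eq hf hcd hp0 hp1 hc hd] with ω hω
    rcases hω with hω | hω <;> simp [hω, hcd, hcd.symm]
  rw [integral_congr_ae hsplit,
    integral_add ((integrable_const _).indicator hCm) ((integrable_const _).indicator hDm),
    integral_indicator_const _ hCm, integral_indicator_const _ hDm, measureReal_def,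
    measureReal_def, hc, hd, ENNReal.toReal_ofReal hp0, ENNReal.toReal_ofReal (sub_nonneg.mpr hp1),
    smul_eq_mul, smul_eq_mul]

end TwoPoint

noncomputable def biasedRademacherMoment (p : ℝ) (k : ℕ) : ℝ :=
  p * √((1 - p) / p) ^ k + (1 - p) * (-√(p / (1 - p))) ^ k

section BiasedRademacher

variable {p : ℝ}

lemma biasedRademacherMoment_one (hp0 : 0 < p) (hp1 : p < 1) :
    biasedRademacherMoment p 1 = 0 := by
  have h : p * √((1 - p) / p) = (1 - p) * √(p / (1 - p)) := by
    have hq : 0 < 1 - p := sub_pos.mpr hp1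
    refine (sq_eq_sq₀ (by positivity) (by positivity)).mp ?_
    rw [mul_pow, mul_pow, Real.sq_sqrt (by positivity), Real.sq_sqrt (by positivity)]
    field_simp
  simp [biasedRademacherMoment, h]

lemma biasedRademacherMoment_two (hp0 : 0 < p) (hp1 : p < 1) :
    biasedRademacherMoment p 2 = 1 := by
  have hq : 0 < 1 - p := sub_pos.mpr hp1
  rw [biasedRademacherMoment, neg_sq, Real.sq_sqrt (by positivity), Real.sq_sqrt (by positivity)]
  field_simp
  ring

lemma biasedRademacherMoment_four (hp0 : 0 < p) (hp1 : p < 1) :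
    biasedRademacherMoment p 4 = 1 + (2 * p - 1) ^ 2 / (p * (1 - p)) := by
  have hq : 0 < 1 - p := sub_pos.mpr hp1
  rw [biasedRademacherMoment, Even.neg_pow (by decide), show (4 : ℕ) = 2 * 2 from rfl, pow_mul,
    pow_mul, Real.sq_sqrt (by positivity), Real.sq_sqrt (by positivity)]
  field_simp
  ring

end BiasedRademacher

lemma one_add_min_le_three_add_mul {r q : ℝ} (hq0 : 0 ≤ q) (hq1 : q ≤ 1) :
    1 + min 2 r ≤ 3 + (1 + r - 3) * q := by
  rcases le_total r 2 with h | h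
  · rw [min_eq_right h]
    nlinarith [mul_nonneg (sub_nonneg.2 h) (sub_nonneg.2 hq1)]
  · rw [min_eq_left h]
    nlinarith [mul_nonneg (sub_nonneg.2 h) hq0]

/-- **Fourth moment of a biased Rademacher sum.** Fix `p ∈ (0,1)` and let `ξ₁, …, ξₙ` be
i.i.d. with `P(ξ₁ = √((1-p)/p)) = p` and `P(ξ₁ = -√(p/(1-p))) = 1-p`. Then for all reals
`a₁, …, aₙ` with `∑ aⱼ² = 1`, one has
`E(∑ aⱼξⱼ)⁴ = 3 + (Eξ₁⁴ - 3) ∑ aⱼ⁴`, and consequently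
`E(∑ aⱼξⱼ)⁴ ≥ 1 + min{2, (2p-1)²/(p(1-p))}`. -/
theorem biased_rademacher_fourth_moment (p : ℝ) (hp : p ∈ Set.Ioo (0 : ℝ) 1)
    {Ω : Type*} [MeasurableSpace Ω] (μ : Measure Ω) [IsProbabilityMeasure μ]
    (n : ℕ) (hn : 0 < n) (ξ : Fin n → Ω → ℝ)
    (hmeas : ∀ i, Measurable (ξ i))
    (hindep : ProbabilityTheory.iIndepFun ξ μ)
    (hdist_pos : ∀ i, μ {ω | ξ i ω = Real.sqrt ((1 - p) / p)} = ENNReal.ofReal p)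
    (hdist_neg : ∀ i, μ {ω | ξ i ω = -Real.sqrt (p / (1 - p))} = ENNReal.ofReal (1 - p))
    (a : Fin n → ℝ) (ha : ∑ j, (a j) ^ 2 = 1) :
    (∫ ω, (∑ j, a j * ξ j ω) ^ 4 ∂μ) =
        3 + ((∫ ω, (ξ ⟨0, hn⟩ ω) ^ 4 ∂μ) - 3) * ∑ j, (a j) ^ 4 ∧
      1 + min 2 ((2 * p - 1) ^ 2 / (p * (1 - p))) ≤
        (∫ ω, (∑ j, a j * ξ j ω) ^ 4 ∂μ) := by
  obtain ⟨hp0, hp1⟩ := hp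
  have hval : √((1 - p) / p) ≠ -√(p / (1 - p)) := by
    have : 0 < √((1 - p) / p) := Real.sqrt_pos.mpr (div_pos (sub_pos.mpr hp1) hp0)
    linarith [Real.sqrt_nonneg (p / (1 - p))]
  have hmoment : ∀ i (k : ℕ), ∫ ω, ξ i ω ^ k ∂μ = biasedRademacherMoment p k := fun i k =>
    integral_comp_of_measure_eq (hmeas i) hval hp0.le hp1.le (hdist_pos i) (hdist_neg i) (· ^ k)
  have hLp : ∀ i, MemLp (fun ω => a i * ξ i ω) 4 μ := fun i =>
    ((memLp_top_of_ae_eq_or_eq (hmeas i).aestronglyMeasurable (ae_eq_or_eq_of_measure_eq (hmeas i)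
      hval hp0.le hp1.le (hdist_pos i) (hdist_neg i))).const_mul (a i)).mono_exponent le_top
  have hscaled : ∀ i (k : ℕ), ∫ ω, (a i * ξ i ω) ^ k ∂μ = a i ^ k * biasedRademacherMoment p k :=
    fun i k => by simp_rw [mul_pow, integral_const_mul, hmoment]
  have hfour : ∫ ω, (∑ j, a j * ξ j ω) ^ 4 ∂μ =
      3 + (biasedRademacherMoment p 4 - 3) * ∑ j, a j ^ 4 := by
    have hindep' : iIndepFun (fun j ω => a j * ξ j ω) μ :=
      hindep.comp _ fun j => measurable_const_mul (a j)
    rw [hindep'.integral_sum_pow_four_of_integral_eq_zero hLp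
      (fun j => by simpa [biasedRademacherMoment_one hp0 hp1] using hscaled j 1)]
    simp_rw [hscaled, biasedRademacherMoment_two hp0 hp1, mul_one, ← pow_mul, ha, ← sum_mul]
    ring
  refine ⟨by rw [hfour, hmoment], ?_⟩
  rw [hfour, biasedRademacherMoment_four hp0 hp1]
  refine one_add_min_le_three_add_mul (sum_nonneg fun j _ => by positivity) ?_
  calc ∑ j, a j ^ 4 = ∑ j, (a j ^ 2) ^ 2 := by simp_rw [← pow_mul]
    _ ≤ (∑ j, a j ^ 2) ^ 2 := sum_sq_le_sq_sum_of_nonneg fun j _ => sq_nonneg (a j)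
    _ = 1 := by rw [ha, one_pow]
end

section
/- Let $q > p > 2$ be real numbers and define the curve $\gamma(t) = (t^2, t^p, t^q, -t)$ for $t \in (0,1)$. Then $\gamma$ has totally positive torsion: for every $t \in (0,1)$, all four leading principal minors of the $4 \times 4$ matrix whose rows are $\gamma^{(1)}(t), \gamma^{(2)}(t), \gamma^{(3)}(t), \gamma^{(4)}(t)$ (the first through fourth derivatives of $\gamma$) are strictly positive. -/
/-- The curve `γ(t) = (t², tᵖ, t^q, -t)`, as a family of four real functions. -/
noncomputable def momentCurve (p q : ℝ) : Fin 4 → ℝ → ℝ :=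
  ![fun t => t ^ 2, fun t => t ^ p, fun t => t ^ q, fun t => -t]

/-- The `4 × 4` matrix whose rows are the first through fourth derivatives
`γ⁽¹⁾(t), γ⁽²⁾(t), γ⁽³⁾(t), γ⁽⁴⁾(t)` of the curve `γ(t) = (t², tᵖ, t^q, -t)`. -/
noncomputable def momentCurveDerivMatrix (p q : ℝ) (t : ℝ) : Matrix (Fin 4) (Fin 4) ℝ :=
  fun i j => iteratedDeriv (i.1 + 1) (momentCurve p q j) t

/-!
For `t > 0` the `n`-th derivative of `t ^ r` is `r (r - 1) ⋯ (r - n + 1) t ^ (r - n)`. Writing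
`t ^ (r - n) = t ^ (4 - n) t ^ (r - 4)` and treating `t ^ (p - 4)`, `t ^ (q - 4)` as variables `a`,
`b`, the four leading principal minors become polynomials, which factor as
`2t`, `2p(p-2) t³ a`, `2pq(p-2)(q-2)(q-p) t⁴ ab` and `2pq(p-1)(q-1)(p-2)(q-2)(q-p) t ab`;
every factor is positive when `2 < p < q` and `t > 0`.
-/

open Matrix

theorem Real.iteratedDeriv_rpow_const (r x : ℝ) (n : ℕ) :
    iteratedDeriv n (fun x : ℝ => x ^ r) x = (descPochhammer ℝ n).eval r * x ^ (r - n) := by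
  rw [iteratedDeriv_eq_iterate, Real.iter_deriv_rpow_const]

def momentCurveDerivPolyMatrix (p q t a b : ℝ) : Matrix (Fin 4) (Fin 4) ℝ :=
  !![2 * t, p * t ^ 3 * a, q * t ^ 3 * b, -1;
     2, p * (p - 1) * t ^ 2 * a, q * (q - 1) * t ^ 2 * b, 0;
     0, p * (p - 1) * (p - 2) * t * a, q * (q - 1) * (q - 2) * t * b, 0;
     0, p * (p - 1) * (p - 2) * (p - 3) * a, q * (q - 1) * (q - 2) * (q - 3) * b, 0]

lemma momentCurveDerivMatrix_eq_momentCurveDerivPolyMatrix {p q t : ℝ} (ht : 0 < t) :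
    momentCurveDerivMatrix p q t =
      momentCurveDerivPolyMatrix p q t (t ^ (p - 4)) (t ^ (q - 4)) := by
  ext i j
  fin_cases i <;> fin_cases j <;>
    simp [momentCurveDerivMatrix, momentCurve, momentCurveDerivPolyMatrix, iteratedDeriv_succ',
      Real.iteratedDeriv_rpow_const, descPochhammer_succ_right, Real.rpow_sub ht] <;>
    field_simp

lemma det_leadingMinor_momentCurveDerivPolyMatrix (p q t a b : ℝ) (k : Fin 4) :
    det ((momentCurveDerivPolyMatrix p q t a b).submatrix
        (Fin.castLE (Nat.succ_le_of_lt k.isLt)) (Fin.castLE (Nat.succ_le_of_lt k.isLt))) =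
      ![2 * t, 2 * p * (p - 2) * t ^ 3 * a,
        2 * p * q * (p - 2) * (q - 2) * (q - p) * t ^ 4 * a * b,
        2 * p * q * (p - 1) * (q - 1) * (p - 2) * (q - 2) * (q - p) * t * a * b] k := by
  fin_cases k <;>
    simp [momentCurveDerivPolyMatrix, det_succ_row_zero, Fin.sum_univ_succ, Fin.succAbove] <;>
    ring

/-- **Totally positive torsion of the curve `γ(t) = (t², tᵖ, t^q, -t)`.** Let `q > p > 2`.
For every `t ∈ (0,1)`, all four leading principal minors of the `4 × 4` matrix whose rows
are `γ⁽¹⁾(t), γ⁽²⁾(t), γ⁽³⁾(t), γ⁽⁴⁾(t)` are strictly positive. -/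
theorem momentCurve_totally_positive_torsion (p q : ℝ) (hp : 2 < p) (hpq : p < q)
    (t : ℝ) (ht : t ∈ Set.Ioo (0 : ℝ) 1) (k : Fin 4) :
    0 < Matrix.det (fun i j : Fin (k.1 + 1) =>
      momentCurveDerivMatrix p q t
        (Fin.castLE (Nat.succ_le_of_lt k.isLt) i)
        (Fin.castLE (Nat.succ_le_of_lt k.isLt) j)) := by
  have ht0 : 0 < t := ht.1
  have ha : 0 < t ^ (p - 4) := Real.rpow_pos_of_pos ht0 _
  have hb : 0 < t ^ (q - 4) := Real.rpow_pos_of_pos ht0 _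
  show 0 < det ((momentCurveDerivMatrix p q t).submatrix _ _)
  rw [momentCurveDerivMatrix_eq_momentCurveDerivPolyMatrix ht0, det_leadingMinor_momentCurveDerivPolyMatrix]
  fin_cases k <;> apply_rules [pow_pos, mul_pos] <;> linarith
end

section
/- For every real $p > 2$ and every $c \in [0,1]$, one has $p c^{p-2} + (2-p)c^p - 2 + \frac{p-2}{p}(1-c)^2 \leq 0$. -/
/-!
Put `x = cᵖ` and `θ = (p - 2)/p ∈ (0, 1)`, so that `c^(p-2) = x^θ`. The concave power `x ↦ x^θ`
lies below its second-order Taylor polynomial at `1`,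
`x^θ ≤ 1 - θ (1 - x) - θ (1 - θ)/2 (1 - x)²` on `[0, 1]`,
because all Taylor coefficients of `(1 - t)^θ` beyond the constant one are negative.
Multiplying by `p` gives `p c^(p-2) ≤ (p - 2) cᵖ + 2 - θ (1 - cᵖ)²`, and `(1 - c)² ≤ (1 - cᵖ)²`
since `cᵖ ≤ c`.
-/

open Real Set

lemma one_add_mul_one_sub_le_rpow_sub_one {y θ : ℝ} (hy0 : 0 < y) (hy1 : y ≤ 1)
    (hθ0 : 0 ≤ θ) (hθ1 : θ ≤ 1) :
    1 + (1 - θ) * (1 - y) ≤ y ^ (θ - 1) := by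
  have bernoulli : y ^ (1 - θ) ≤ 1 + (1 - θ) * (y - 1) := by
    simpa using rpow_one_add_le_one_add_mul_self (s := y - 1) (by linarith)
      (by linarith : 0 ≤ 1 - θ) (by linarith)
  have hpos : 0 < y ^ (1 - θ) := rpow_pos_of_pos hy0 _
  rw [show θ - 1 = -(1 - θ) by ring, rpow_neg hy0.le, ← one_div, le_div_iff₀ hpos]
  nlinarith [sq_nonneg ((1 - θ) * (1 - y)), mul_nonneg (sub_nonneg.2 hθ1) (sub_nonneg.2 hy1)]

lemma rpow_le_taylor_quadratic {θ : ℝ} (hθ0 : 0 ≤ θ) (hθ1 : θ ≤ 1) {x : ℝ}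
    (hx : x ∈ Icc (0 : ℝ) 1) :
    x ^ θ ≤ 1 - θ * (1 - x) - θ * (1 - θ) / 2 * (1 - x) ^ 2 := by
  set g : ℝ → ℝ := fun y ↦ 1 - θ * (1 - y) - θ * (1 - θ) / 2 * (1 - y) ^ 2 - y ^ θ
  have hg : ∀ y ∈ Ioo (0 : ℝ) 1,
      HasDerivAt g (θ + θ * (1 - θ) * (1 - y) - θ * y ^ (θ - 1)) y := fun y hy ↦ by
    have := ((((hasDerivAt_id y).const_sub 1).const_mul θ).const_sub 1).sub
      ((((hasDerivAt_id y).const_sub 1).pow 2).const_mul (θ * (1 - θ) / 2)) |>.sub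
      (hasDerivAt_rpow_const (p := θ) (Or.inl hy.1.ne'))
    refine this.congr_deriv ?_
    simp only [id_eq]
    ring
  have hanti : AntitoneOn g (Icc 0 1) := by
    refine antitoneOn_of_hasDerivWithinAt_nonpos
      (f' := fun y ↦ θ + θ * (1 - θ) * (1 - y) - θ * y ^ (θ - 1)) (convex_Icc 0 1)
      (by fun_prop (disch := exact hθ0)) (fun y hy ↦ ?_) (fun y hy ↦ ?_)
    · rw [interior_Icc] at hy
      exact (hg y hy).hasDerivWithinAt
    · rw [interior_Icc] at hy
      nlinarith [one_add_mul_one_sub_le_rpow_sub_one hy.1 hy.2.le hθ0 hθ1]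
  have := hanti hx (right_mem_Icc.2 zero_le_one) hx.2
  simp only [g, sub_self, one_rpow] at this
  linarith

/-- Derivative boundary estimate `ψ(c) ≤ 0` (i.e. `f'(1) ≤ 0`) in the proof of the lower
bound `B(a,c,p) ≥ min{1, p-2}`: for every real `p > 2` and every `c ∈ [0,1]`,
`p c^(p-2) + (2-p)cᵖ - 2 + ((p-2)/p)(1-c)² ≤ 0`. -/
theorem psi_nonpos (p : ℝ) (hp : 2 < p) (c : ℝ) (hc : c ∈ Set.Icc (0 : ℝ) 1) :
    p * c ^ (p - 2) + (2 - p) * c ^ p - 2 + (p - 2) / p * (1 - c) ^ 2 ≤ 0 := by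
  obtain ⟨hc0, hc1⟩ := hc
  have hp0 : 0 < p := by linarith
  set θ := (p - 2) / p with hθ
  have hθ0 : 0 ≤ θ := div_nonneg (by linarith) hp0.le
  have hθ1 : θ ≤ 1 := (div_le_one hp0).2 (by linarith)
  have hcp : c ^ p ∈ Icc (0 : ℝ) 1 := ⟨rpow_nonneg hc0 p, rpow_le_one hc0 hc1 hp0.le⟩
  have htaylor := rpow_le_taylor_quadratic hθ0 hθ1 hcp
  rw [← rpow_mul hc0, mul_div_cancel₀ _ hp0.ne'] at htaylor
  have hcp_le : c ^ p ≤ c := rpow_le_self_of_le_one hc0 hc1 (by linarith)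
  have hsq : (1 - c) ^ 2 ≤ (1 - c ^ p) ^ 2 := pow_le_pow_left₀ (by linarith) (by linarith) 2
  have hbound : p * c ^ (p - 2) ≤ 2 + (p - 2) * c ^ p - θ * (1 - c ^ p) ^ 2 := by
    calc p * c ^ (p - 2)
        ≤ p * (1 - θ * (1 - c ^ p) - θ * (1 - θ) / 2 * (1 - c ^ p) ^ 2) :=
          mul_le_mul_of_nonneg_left htaylor hp0.le
      _ = 2 + (p - 2) * c ^ p - θ * (1 - c ^ p) ^ 2 := by
          rw [hθ]; field_simp; ring
  linarith [mul_le_mul_of_nonneg_left hsq hθ0]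
end

section
/- For every real $p > 2$ and every $c \in [0,1]$, one has $(2-p)c^p + p c^{p-2} + p^2 c^2 - 2p^2 c - 2 + p^2 \geq 0$. -/
/-!
With `p² c² - 2p² c + p² = p²(1-c)²` and `c^(p-2) + c^(p-1) = c^(p-2) (1+c)`, the left-hand
side is `p(1-c) (p(1-c) - (1 - c^(p-2))) + (p(1-c)(1 + c^(p-1)) - 2(1 - c^p))`.
The first summand is nonnegative by Bernoulli's inequality `1 - c^p ≤ p(1-c)`. The second one is
the trapezoid rule for the convex function `t^(p-1)` on `[c, 1]`, whose integral is `(1 - c^p)/p`;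
it is proved by differentiating in `c`, the derivative being nonpositive by weighted AM-GM.
-/

namespace Real

variable {p x c : ℝ}

/-- Weighted AM-GM for the weights `1/(p-1)` and `(p-2)/(p-1)`. -/
lemma sub_one_mul_rpow_sub_two_le (hp : 2 ≤ p) (hx : 0 ≤ x) :
    (p - 1) * x ^ (p - 2) ≤ 1 + (p - 2) * x ^ (p - 1) := by
  have hp1 : 0 < p - 1 := by linarith
  have amgm := geom_mean_le_arith_mean2_weighted (p₁ := 1) (p₂ := x ^ (p - 1))
    (by positivity : 0 ≤ 1 / (p - 1)) (div_nonneg (by linarith) hp1.le : 0 ≤ (p - 2) / (p - 1))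
    zero_le_one (rpow_nonneg hx _) (by field_simp; ring)
  rw [one_rpow, one_mul, ← rpow_mul hx, mul_div_cancel₀ _ hp1.ne'] at amgm
  calc (p - 1) * x ^ (p - 2)
      ≤ (p - 1) * (1 / (p - 1) * 1 + (p - 2) / (p - 1) * x ^ (p - 1)) := by gcongr
    _ = 1 + (p - 2) * x ^ (p - 1) := by field_simp

lemma two_mul_one_sub_rpow_le (hp : 2 ≤ p) (hc₀ : 0 ≤ c) (hc₁ : c ≤ 1) :
    2 * (1 - c ^ p) ≤ p * (1 - c) * (1 + c ^ (p - 1)) := by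
  let F : ℝ → ℝ := fun x ↦ p * (1 - x) * (1 + x ^ (p - 1)) + 2 * x ^ p
  let F' : ℝ → ℝ := fun x ↦ p * ((p - 1) * (1 - x) * x ^ (p - 2) + x ^ (p - 1) - 1)
  have hF : ∀ x, HasDerivAt F (F' x) x := fun x ↦ by
    have d₁ := hasDerivAt_rpow_const (x := x) (p := p - 1) (Or.inr (by linarith))
    have d₂ := hasDerivAt_rpow_const (x := x) (p := p) (Or.inr (by linarith))
    rw [show p - 1 - 1 = p - 2 by ring] at d₁
    exact ((((hasDerivAt_id x).const_sub 1).const_mul p).mul (d₁.const_add 1)).add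
      (d₂.const_mul 2) |>.congr_deriv (by simp only [F', id]; ring)
  have hF'_nonpos : ∀ x ∈ interior (Set.Icc (0 : ℝ) 1), F' x ≤ 0 := fun x hx ↦ by
    rw [interior_Icc] at hx
    have amgm := sub_one_mul_rpow_sub_two_le hp hx.1.le
    have hx' : x ^ (p - 1) = x ^ (p - 2) * x := by
      rw [← rpow_add_one' hx.1.le (by linarith)]; ring_nf
    have hp₀ : 0 ≤ p := by linarith
    calc F' x = p * ((p - 1) * x ^ (p - 2) - (p - 2) * x ^ (p - 1) - 1) := by
          simp only [F']; rw [hx']; ring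
      _ ≤ 0 := mul_nonpos_of_nonneg_of_nonpos hp₀ (by linarith)
  have anti : AntitoneOn F (Set.Icc 0 1) :=
    antitoneOn_of_hasDerivWithinAt_nonpos (convex_Icc 0 1)
      (fun x _ ↦ (hF x).continuousAt.continuousWithinAt)
      (fun x _ ↦ (hF x).hasDerivWithinAt) hF'_nonpos
  have := anti ⟨hc₀, hc₁⟩ ⟨zero_le_one, le_rfl⟩ hc₁
  simp only [F, one_rpow, sub_self, mul_zero, zero_mul, zero_add, mul_one] at this
  linarith

lemma one_sub_rpow_sub_two_le (hp : 2 ≤ p) (hc₀ : 0 ≤ c) (hc₁ : c ≤ 1) :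
    1 - c ^ (p - 2) ≤ p * (1 - c) := by
  have bernoulli := one_add_mul_self_le_rpow_one_add (by linarith : -1 ≤ c - 1)
    (by linarith : 1 ≤ p)
  have mono : c ^ p ≤ c ^ (p - 2) :=
    rpow_le_rpow_of_exponent_ge' hc₀ hc₁ (by linarith) (by linarith)
  rw [add_sub_cancel] at bernoulli
  linarith

end Real

/-- The estimate `h(c) ≥ 0` (i.e. `g'(1) ≥ 0` with `M = p²`) in the proof of the upper
bound `B(a,c,p) ≤ p²`: for every real `p > 2` and every `c ∈ [0,1]`,
`(2-p)cᵖ + p c^(p-2) + p²c² - 2p²c - 2 + p² ≥ 0`. -/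
theorem h_nonneg (p : ℝ) (hp : 2 < p) (c : ℝ) (hc : c ∈ Set.Icc (0 : ℝ) 1) :
    0 ≤ (2 - p) * c ^ p + p * c ^ (p - 2) + p ^ 2 * c ^ 2 - 2 * p ^ 2 * c - 2 + p ^ 2 := by
  obtain ⟨hc₀, hc₁⟩ := hc
  have hpc : 0 ≤ p * (1 - c) := mul_nonneg (by linarith) (by linarith)
  have trapezoid := Real.two_mul_one_sub_rpow_le hp.le hc₀ hc₁
  have bernoulli := mul_nonneg hpc (sub_nonneg.2 (Real.one_sub_rpow_sub_two_le hp.le hc₀ hc₁))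
  have h₁ : c ^ (p - 1) = c ^ (p - 2) * c := by
    rw [← Real.rpow_add_one' hc₀ (by linarith)]; ring_nf
  have h₂ : c ^ p = c ^ (p - 2) * c * c := by
    rw [← h₁, ← Real.rpow_add_one' hc₀ (by linarith)]; ring_nf
  rw [h₁, h₂] at trapezoid
  rw [h₂]
  linear_combination bernoulli + trapezoid
end

section
/- For every real $p > 2$ and every $c \in [0,1]$, one has $-(p+1)(p-2)c^p + p(p-1)c^{p-2} + 2p^2 c^2 - 2p^2 c - 2 \leq 0$. -/
/-!
Since `c ^ p = c ^ (p - 2) * c ^ 2`, the left-hand side is affine in `x = c ^ (p - 2)`, with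
slope `p (p - 1) - (p + 1) (p - 2) c² ≥ 2`. So it suffices to bound `c ^ (p - 2)` from above by a
polynomial in `c` that makes the resulting polynomial nonpositive on `[0, 1]`: for `p ≥ 3` the
bound `c ^ (p - 2) ≤ c` does it, and for `2 < p < 3` the second-order Taylor polynomial of
`c ^ (p - 2)` at `c = 1`, which is an upper bound for `c ^ s` when `s ∈ [0, 1]` because the third
derivative `s (s - 1) (s - 2) c ^ (s - 3)` is then nonnegative.
-/

open Real Set

theorem one_add_mul_self_le_rpow_one_add_of_nonpos {s : ℝ} (hs : -1 < s) {p : ℝ}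
    (hp1 : -1 ≤ p) (hp2 : p ≤ 0) : 1 + p * s ≤ (1 + s) ^ p := by
  have hpos : 0 < (1 + s) ^ p := rpow_pos_of_pos (by linarith) _
  have hinv : ((1 + s) ^ p)⁻¹ ≤ 1 - p * s := by
    rw [← rpow_neg (by linarith)]
    linarith [rpow_one_add_le_one_add_mul_self hs.le (p := -p) (by linarith) (by linarith)]
  rcases le_or_gt (1 + p * s) 0 with hneg | hpos'
  · linarith
  · -- `(1 + p s) (1 - p s) ≤ 1`
    rw [← one_div, div_le_iff₀ hpos] at hinv
    nlinarith [sq_nonneg (p * s), mul_le_mul_of_nonneg_left hinv hpos'.le]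

theorem rpow_le_taylor_two {s : ℝ} (hs0 : 0 ≤ s) (hs1 : s ≤ 1) {c : ℝ}
    (hc : c ∈ Icc (0 : ℝ) 1) :
    c ^ s ≤ 1 + s * (c - 1) + s * (s - 1) / 2 * (c - 1) ^ 2 := by
  set f : ℝ → ℝ := fun x ↦ x ^ s - s * (x - 1) - s * (s - 1) / 2 * (x - 1) ^ 2
  have hderiv (x : ℝ) (hx : x ∈ interior (Icc (0 : ℝ) 1)) :
      HasDerivAt f (s * (x ^ (s - 1) - (1 + (s - 1) * (x - 1)))) x := by
    rw [interior_Icc] at hx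
    refine (((hasDerivAt_rpow_const (Or.inl hx.1.ne')).sub
      (((hasDerivAt_id x).sub_const 1).const_mul s)).sub
      ((((hasDerivAt_id x).sub_const 1).pow 2).const_mul (s * (s - 1) / 2))).congr_deriv ?_
    simp only [id]
    ring
  have hmono : MonotoneOn f (Icc 0 1) := by
    refine monotoneOn_of_hasDerivWithinAt_nonneg (convex_Icc 0 1) ?_
      (fun x hx ↦ (hderiv x hx).hasDerivWithinAt) fun x hx ↦ ?_
    · exact ((continuous_id.rpow_const fun _ ↦ Or.inr hs0).sub (by fun_prop)).sub
        (by fun_prop) |>.continuousOn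
    · rw [interior_Icc] at hx
      have := one_add_mul_self_le_rpow_one_add_of_nonpos (s := x - 1) (p := s - 1)
        (by linarith [hx.1]) (by linarith) (by linarith)
      rw [add_sub_cancel] at this
      exact mul_nonneg hs0 (sub_nonneg.2 this)
  have := hmono hc (right_mem_Icc.2 zero_le_one) hc.2
  simp only [f, one_rpow] at this
  linarith

def vPoly (p c x : ℝ) : ℝ :=
  (p * (p - 1) - (p + 1) * (p - 2) * c ^ 2) * x + 2 * p ^ 2 * c ^ 2 - 2 * p ^ 2 * c - 2

theorem vPoly_monotone {p c : ℝ} (hp : 2 ≤ p) (hc : |c| ≤ 1) : Monotone (vPoly p c) := by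
  have hc2 : c ^ 2 ≤ 1 := (sq_le_one_iff_abs_le_one c).2 hc
  have hpq : 0 ≤ (p + 1) * (p - 2) := mul_nonneg (by linarith) (by linarith)
  intro x y hxy
  unfold vPoly
  nlinarith [mul_nonneg hpq (sub_nonneg.2 hc2), sub_nonneg.2 hxy]

theorem vPoly_self_nonpos {p c : ℝ} (hp : 2 ≤ p) (hc : c ∈ Icc (0 : ℝ) 1) :
    vPoly p c c ≤ 0 := by
  obtain ⟨hc0, hc1⟩ := hc
  have hfactor :
      vPoly p c c = -(1 - c) * (-(p + 1) * (p - 2) * c ^ 2 + (p ^ 2 + p + 2) * c + 2) := by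
    unfold vPoly; ring
  have hpq : 0 ≤ (p + 1) * (p - 2) := mul_nonneg (by linarith) (by linarith)
  have hq : 0 ≤ -(p + 1) * (p - 2) * c ^ 2 + (p ^ 2 + p + 2) * c + 2 := by
    nlinarith [mul_nonneg hpq (mul_nonneg hc0 (sub_nonneg.2 hc1))]
  rw [hfactor]
  nlinarith [mul_nonneg (sub_nonneg.2 hc1) hq]

theorem vPoly_taylor_nonpos {p c : ℝ} (hp2 : 2 ≤ p) (hp3 : p ≤ 3)
    (hc : c ∈ Icc (0 : ℝ) 1) :
    vPoly p c (1 + (p - 2) * (c - 1) + (p - 2) * (p - 2 - 1) / 2 * (c - 1) ^ 2) ≤ 0 := by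
  obtain ⟨hc0, hc1⟩ := hc
  obtain ⟨s, rfl⟩ : ∃ s, p = s + 2 := ⟨p - 2, by ring⟩
  obtain ⟨u, rfl⟩ : ∃ u, c = 1 - u := ⟨1 - c, by ring⟩
  have hs0 : 0 ≤ s := by linarith
  have hs1 : s ≤ 1 := by linarith
  have hu0 : 0 ≤ u := by linarith
  have hu1 : u ≤ 1 := by linarith
  have hfactor : vPoly (s + 2) (1 - u)
      (1 + (s + 2 - 2) * (1 - u - 1) + (s + 2 - 2) * (s + 2 - 2 - 1) / 2 * (1 - u - 1) ^ 2) =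
      u * (-(s + 2) * (4 * (1 - u) + 2 * s ^ 2 * u) +
        s ^ 2 * (s + 3) * u ^ 2 * (s + (1 - s) * u / 2)) := by
    unfold vPoly; ring
  have hlast : s + (1 - s) * u / 2 ≤ (1 + s) / 2 := by nlinarith
  have hquad : (s + 3) * (s + 1) * u ≤ 4 * (s + 2) := by nlinarith
  have hH : -(s + 2) * (4 * (1 - u) + 2 * s ^ 2 * u) +
      s ^ 2 * (s + 3) * u ^ 2 * (s + (1 - s) * u / 2) ≤ 0 := by
    nlinarith [mul_le_mul_of_nonneg_left hlast (by positivity : 0 ≤ s ^ 2 * (s + 3) * u ^ 2),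
      mul_le_mul_of_nonneg_left hquad (by positivity : 0 ≤ s ^ 2 * u)]
  rw [hfactor]
  exact mul_nonpos_of_nonneg_of_nonpos hu0 hH

/-- The concavity estimate `v(c) ≤ 0` (i.e. `g''(1) ≤ 0` with `M = p²`) in the proof of
the upper bound `B(a,c,p) ≤ p²`: for every real `p > 2` and every `c ∈ [0,1]`,
`-(p+1)(p-2)cᵖ + p(p-1)c^(p-2) + 2p²c² - 2p²c - 2 ≤ 0`. -/
theorem v_nonpos (p : ℝ) (hp : 2 < p) (c : ℝ) (hc : c ∈ Set.Icc (0 : ℝ) 1) :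
    -(p + 1) * (p - 2) * c ^ p + p * (p - 1) * c ^ (p - 2) +
        2 * p ^ 2 * c ^ 2 - 2 * p ^ 2 * c - 2 ≤ 0 := by
  have hsplit : c ^ p = c ^ (p - 2) * c ^ 2 := by
    rw [← rpow_two, ← rpow_add' hc.1 (by linarith), sub_add_cancel]
  have hv : -(p + 1) * (p - 2) * c ^ p + p * (p - 1) * c ^ (p - 2) +
      2 * p ^ 2 * c ^ 2 - 2 * p ^ 2 * c - 2 = vPoly p c (c ^ (p - 2)) := by
    rw [hsplit]; unfold vPoly; ring
  have hmono := vPoly_monotone hp.le (abs_le.2 ⟨by linarith [hc.1], hc.2⟩)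
  rw [hv]
  rcases le_total 3 p with hp3 | hp3
  · exact (hmono (rpow_le_self_of_le_one hc.1 hc.2 (by linarith))).trans
      (vPoly_self_nonpos hp.le hc)
  · exact (hmono (rpow_le_taylor_two (by linarith) (by linarith) hc)).trans
      (vPoly_taylor_nonpos hp.le hp3 hc)
end

section
/- For every real $t \in [0,1)$, one has $2^{4-t} \geq (2-t)^{2-t}(1-t)^{2-t}(2+t)^2(1+t)^{2-t}$. -/
/-!
Put `x = (2-t)(1-t)(1+t)/2`, so that the left-hand side is `2^(2-t) x^(2-t) (2+t)²` and the claim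
becomes `x^(2-t) (2+t)² ≤ 4`. Bounding both factors with `y ≤ exp (y - 1)` gives
`x^(2-t) (2+t)² ≤ 4 exp ((x-1)(2-t) + t)`, and the exponent equals `-t²(1-t)(3-t)/2 ≤ 0`.
-/

open Real

theorem Real.rpow_le_exp_sub_one_mul {x s : ℝ} (hx : 0 ≤ x) (hs : 0 ≤ s) :
    x ^ s ≤ exp ((x - 1) * s) :=
  calc x ^ s ≤ exp (x - 1) ^ s := rpow_le_rpow hx (by linarith [add_one_le_exp (x - 1)]) hs
    _ = exp ((x - 1) * s) := (exp_mul _ _).symm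

theorem two_add_sq_le_four_mul_exp {t : ℝ} (ht : -2 ≤ t) : (2 + t) ^ 2 ≤ 4 * exp t := by
  have h := rpow_le_exp_sub_one_mul (x := 1 + t / 2) (s := 2) (by linarith) zero_le_two
  rw [rpow_two] at h
  calc (2 + t) ^ 2 = 4 * (1 + t / 2) ^ 2 := by ring
    _ ≤ 4 * exp ((1 + t / 2 - 1) * 2) := by gcongr
    _ = 4 * exp t := by ring_nf

theorem half_prod_rpow_mul_two_add_sq_le_four {t : ℝ} (h0 : 0 ≤ t) (h1 : t ≤ 1) :
    ((2 - t) * (1 - t) * (1 + t) / 2) ^ (2 - t) * (2 + t) ^ 2 ≤ 4 := by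
  set x := (2 - t) * (1 - t) * (1 + t) / 2
  have hx : 0 ≤ x :=
    div_nonneg (mul_nonneg (mul_nonneg (by linarith) (by linarith)) (by linarith)) zero_le_two
  have hexponent : (x - 1) * (2 - t) + t ≤ 0 := by
    have hid : (x - 1) * (2 - t) + t = -(t ^ 2 * ((1 - t) * (3 - t))) / 2 := by ring
    have : 0 ≤ t ^ 2 * ((1 - t) * (3 - t)) := by
      apply mul_nonneg (sq_nonneg t) (mul_nonneg _ _) <;> linarith
    linarith
  calc x ^ (2 - t) * (2 + t) ^ 2 ≤ exp ((x - 1) * (2 - t)) * (4 * exp t) :=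
        mul_le_mul (rpow_le_exp_sub_one_mul hx (by linarith))
          (two_add_sq_le_four_mul_exp (by linarith)) (by positivity) (by positivity)
    _ = 4 * exp ((x - 1) * (2 - t) + t) := by rw [exp_add]; ring
    _ ≤ 4 * exp 0 := by gcongr
    _ = 4 := by simp

/-- For every real `t ∈ [0,1)`,
`2^(4-t) ≥ (2-t)^(2-t) (1-t)^(2-t) (2+t)² (1+t)^(2-t)`. -/
theorem power_inequality (t : ℝ) (ht : t ∈ Set.Ico (0 : ℝ) 1) :
    (2 - t) ^ (2 - t) * (1 - t) ^ (2 - t) * (2 + t) ^ 2 * (1 + t) ^ (2 - t) ≤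
      (2 : ℝ) ^ (4 - t) := by
  obtain ⟨h0, h1⟩ := ht
  have hsplit : (2 - t) ^ (2 - t) * (1 - t) ^ (2 - t) * (1 + t) ^ (2 - t) =
      2 ^ (2 - t) * ((2 - t) * (1 - t) * (1 + t) / 2) ^ (2 - t) := by
    have h2t : 0 ≤ 2 - t := by linarith
    have h1t : 0 ≤ 1 - t := by linarith
    have hprod : 0 ≤ (2 - t) * (1 - t) * (1 + t) := mul_nonneg (mul_nonneg h2t h1t) (by linarith)
    rw [← mul_rpow h2t h1t, ← mul_rpow (mul_nonneg h2t h1t) (by linarith),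
      ← mul_rpow zero_le_two (div_nonneg hprod zero_le_two), mul_div_cancel₀ _ two_ne_zero]
  calc (2 - t) ^ (2 - t) * (1 - t) ^ (2 - t) * (2 + t) ^ 2 * (1 + t) ^ (2 - t)
      = 2 ^ (2 - t) * (((2 - t) * (1 - t) * (1 + t) / 2) ^ (2 - t) * (2 + t) ^ 2) := by
        rw [mul_right_comm _ ((2 + t) ^ 2), hsplit, mul_assoc]
    _ ≤ 2 ^ (2 - t) * 4 := by
        gcongr
        exact half_prod_rpow_mul_two_add_sq_le_four h0 h1.le
    _ = 2 ^ (4 - t) := by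
        rw [show (4 : ℝ) - t = (2 - t) + 2 by ring, rpow_add two_pos]
        norm_num
end
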